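/- arXiv:2311.17274 — 5 statements merged into one kernel-verified Lean document; each statement's English description precedes it below -/
import Mathlib

section
/- For every integer d ≥ 0 the following multiplicity formulas hold: [S_d : triv] = #{(a,b) ∈ ℕ² : 2a + nb = d}; [S_d : sgn] = #{(a,b) ∈ ℕ² : 2a + nb = d − n}; and for each 1 ≤ i ≤ C, [S_d : χ_i] = #{(a,b) ∈ ℕ² : 2a + nb = d − i} + #{(a,b) ∈ ℕ² : 2a + nb = d − (n − i)}. -/
noncomputable section

open MvPolynomial CategoryTheory

namespace DP

lemma ne_zero_of_pow_eq_one {n : ℕ} (hn : n ≠ 0) {ζ : ℂ} (h1 : ζ ^ n = 1) : ζ ≠ 0 := by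
  intro h
  rw [h, zero_pow hn] at h1
  exact zero_ne_one h1

lemma zpow_congr {n : ℕ} (hn : n ≠ 0) {ζ : ℂ} (h1 : ζ ^ n = 1) {a b : ℤ}
    (h : ((a : ZMod n) = (b : ZMod n))) : ζ ^ a = ζ ^ b := by
  have hζ0 : ζ ≠ 0 := ne_zero_of_pow_eq_one hn h1
  obtain ⟨t, ht⟩ : (n : ℤ) ∣ a - b := by
    rwa [← ZMod.intCast_zmod_eq_zero_iff_dvd, Int.cast_sub, sub_eq_zero]
  have ha : a = b + n * t := by linarith
  rw [ha, zpow_add₀ hζ0, zpow_mul, zpow_natCast, h1, one_zpow, mul_one]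

lemma zpow_eq_mul {n : ℕ} (hn : n ≠ 0) {ζ : ℂ} (h1 : ζ ^ n = 1) {a b c : ℤ}
    (h : ((a : ZMod n) = ((b + c : ℤ) : ZMod n))) : ζ ^ a = ζ ^ b * ζ ^ c := by
  rw [← zpow_add₀ (ne_zero_of_pow_eq_one hn h1)]
  exact zpow_congr hn h1 h

/-- The matrix of the element of `D_n` in the two-dimensional representation `χ_m`. -/
def chiMat (n : ℕ) (ζ : ℂ) (m : ℤ) : DihedralGroup n → Matrix (Fin 2) (Fin 2) ℂ
  | DihedralGroup.r k => !![ζ ^ (m * (k.val : ℤ)), 0; 0, ζ ^ (-(m * (k.val : ℤ)))]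
  | DihedralGroup.sr k => !![0, ζ ^ (-(m * (k.val : ℤ))); ζ ^ (m * (k.val : ℤ)), 0]

lemma chiMat_one {n : ℕ} [NeZero n] (ζ : ℂ) (m : ℤ) : chiMat n ζ m 1 = 1 := by
  rw [DihedralGroup.one_def]
  show !![ζ ^ (m * ((0 : ZMod n).val : ℤ)), 0; 0, ζ ^ (-(m * ((0 : ZMod n).val : ℤ)))] = 1
  rw [ZMod.val_zero]
  norm_num
  exact Matrix.one_fin_two.symm

lemma chiMat_mul {n : ℕ} [NeZero n] {ζ : ℂ} (h1 : ζ ^ n = 1) (m : ℤ) (g h : DihedralGroup n) :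
    chiMat n ζ m (g * h) = chiMat n ζ m g * chiMat n ζ m h := by
  have hn : n ≠ 0 := NeZero.ne n
  rcases g with j | j <;> rcases h with k | k <;>
    · ext a b
      fin_cases a <;> fin_cases b <;>
        simp only [DihedralGroup.r_mul_r, DihedralGroup.r_mul_sr, DihedralGroup.sr_mul_r,
          DihedralGroup.sr_mul_sr, chiMat, Matrix.mul_apply, Fin.sum_univ_two,
          Fin.isValue, Fin.mk_zero, Fin.mk_one, Matrix.of_apply, Matrix.cons_val',
          Matrix.cons_val_zero, Matrix.cons_val_one, Matrix.head_cons, Matrix.empty_val',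
          Matrix.cons_val_fin_one, Matrix.vecHead, mul_zero, zero_mul, add_zero, zero_add,
          mul_one, one_mul] <;>
        first
          | rfl
          | (apply zpow_eq_mul hn h1
             push_cast [ZMod.natCast_zmod_val]
             ring)

/-- The two-dimensional representation `χ_m` of the dihedral group `D_n`. -/
def chiRep (n : ℕ) [NeZero n] (ζ : ℂ) (h1 : ζ ^ n = 1) (m : ℤ) :
    Representation ℂ (DihedralGroup n) (Fin 2 → ℂ) where
  toFun g := (chiMat n ζ m g).mulVecLin
  map_one' := by
    show (chiMat n ζ m 1).mulVecLin = 1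
    rw [chiMat_one, Matrix.mulVecLin_one]
    rfl
  map_mul' g h := by
    show (chiMat n ζ m (g * h)).mulVecLin = (chiMat n ζ m g).mulVecLin * (chiMat n ζ m h).mulVecLin
    rw [chiMat_mul h1 m g h, Matrix.mulVecLin_mul]
    rfl

/-- The trivial one-dimensional representation of `D_n`. -/
def trivRep (n : ℕ) : Representation ℂ (DihedralGroup n) ℂ :=
  Representation.trivial ℂ (DihedralGroup n) ℂ

/-- sign of an element of the dihedral group -/
def sgnPM {n : ℕ} : DihedralGroup n → ℂ
  | DihedralGroup.r _ => 1
  | DihedralGroup.sr _ => -1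

/-- The sign one-dimensional representation of `D_n` (`r ↦ 1`, `s ↦ -1`). -/
def sgnRep (n : ℕ) : Representation ℂ (DihedralGroup n) ℂ where
  toFun g := sgnPM g • LinearMap.id
  map_one' := by
    rw [DihedralGroup.one_def]
    show sgnPM (DihedralGroup.r 0) • LinearMap.id = 1
    simp [sgnPM]
    rfl
  map_mul' g h := by
    rcases g with j | j <;> rcases h with k | k <;>
      refine LinearMap.ext fun x => ?_ <;>
        simp [sgnPM, Module.End.mul_apply]

/-- Direct sum of two representations. -/
def prodRep {G V U : Type*} [Monoid G] [AddCommGroup V] [Module ℂ V]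
    [AddCommGroup U] [Module ℂ U] (ρ : Representation ℂ G V) (τ : Representation ℂ G U) :
    Representation ℂ G (V × U) where
  toFun g := (ρ g).prodMap (τ g)
  map_one' := LinearMap.ext fun x => by simp
  map_mul' g h := LinearMap.ext fun x => by simp [Module.End.mul_apply]

/-- Direct sum of a family of representations. -/
def piRep {G ι : Type*} [Monoid G] {V : ι → Type*} [∀ i, AddCommGroup (V i)]
    [∀ i, Module ℂ (V i)] (ρ : ∀ i, Representation ℂ G (V i)) :
    Representation ℂ G (∀ i, V i) where
  toFun g := LinearMap.pi fun i => (ρ i g).comp (LinearMap.proj i)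
  map_one' := LinearMap.ext fun x => by
    ext i
    simp
  map_mul' g h := LinearMap.ext fun x => by
    ext i
    simp [Module.End.mul_apply]

/-- The action of the dihedral group element on the polynomial ring `ℂ[X,Y]`,
as a `ℂ`-algebra homomorphism: `r^k` sends `X ↦ ζ^k X`, `Y ↦ ζ^{-k} Y`, and
`s r^k` sends `X ↦ ζ^k Y`, `Y ↦ ζ^{-k} X`. -/
def polyAct (n : ℕ) (ζ : ℂ) : DihedralGroup n → (MvPolynomial (Fin 2) ℂ →ₐ[ℂ] MvPolynomial (Fin 2) ℂ)
  | DihedralGroup.r k => aeval ![(ζ ^ ((k.val : ℤ))) • X 0, (ζ ^ (-(k.val : ℤ))) • X 1]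
  | DihedralGroup.sr k => aeval ![(ζ ^ ((k.val : ℤ))) • X 1, (ζ ^ (-(k.val : ℤ))) • X 0]

lemma polyAct_one (n : ℕ) [NeZero n] (ζ : ℂ) :
    polyAct n ζ 1 = AlgHom.id ℂ (MvPolynomial (Fin 2) ℂ) := by
  rw [DihedralGroup.one_def]
  apply algHom_ext
  intro i
  fin_cases i <;> simp [polyAct]

lemma polyAct_mul (n : ℕ) [NeZero n] {ζ : ℂ} (h1 : ζ ^ n = 1) (g h : DihedralGroup n) :
    polyAct n ζ (g * h) = (polyAct n ζ g).comp (polyAct n ζ h) := by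
  have hn : n ≠ 0 := NeZero.ne n
  rcases g with j | j <;> rcases h with k | k <;>
    · apply algHom_ext
      intro i
      fin_cases i <;>
        simp only [DihedralGroup.r_mul_r, DihedralGroup.r_mul_sr, DihedralGroup.sr_mul_r,
          DihedralGroup.sr_mul_sr, polyAct, AlgHom.comp_apply, aeval_X, Fin.isValue,
          Fin.mk_zero, Fin.mk_one, Matrix.cons_val_zero, Matrix.cons_val_one, Matrix.head_cons,
          map_smul, smul_smul] <;>
        · congr 1
          apply zpow_eq_mul hn h1
          push_cast [ZMod.natCast_zmod_val]
          ring

/-- The representation of `D_n` on the polynomial ring `ℂ[X,Y]` induced by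
`r·X = ζX`, `r·Y = ζ⁻¹Y`, `s·X = Y`, `s·Y = X`. -/
def polyRep (n : ℕ) [NeZero n] (ζ : ℂ) (h1 : ζ ^ n = 1) :
    Representation ℂ (DihedralGroup n) (MvPolynomial (Fin 2) ℂ) where
  toFun g := (polyAct n ζ g).toLinearMap
  map_one' := by
    show (polyAct n ζ 1).toLinearMap = 1
    rw [polyAct_one]
    rfl
  map_mul' g h := by
    show (polyAct n ζ (g * h)).toLinearMap = _
    rw [polyAct_mul n h1 g h]
    rfl

lemma isHomogeneous_aeval {d : ℕ} (g : Fin 2 → MvPolynomial (Fin 2) ℂ)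
    (hg : ∀ j, (g j).IsHomogeneous 1) {f : MvPolynomial (Fin 2) ℂ}
    (hf : f.IsHomogeneous d) : (aeval g f).IsHomogeneous d := by
  have := hf.eval₂ (algebraMap ℂ (MvPolynomial (Fin 2) ℂ)) g
    (fun r => isHomogeneous_C _ r) hg
  rw [one_mul] at this
  rwa [aeval_def]

lemma polyAct_isHomogeneous (n : ℕ) (ζ : ℂ) (g : DihedralGroup n) {d : ℕ}
    {f : MvPolynomial (Fin 2) ℂ} (hf : f.IsHomogeneous d) :
    (polyAct n ζ g f).IsHomogeneous d := by
  rcases g with k | k <;>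
    · apply isHomogeneous_aeval _ _ hf
      intro j
      fin_cases j <;>
        · simp only [Fin.isValue, Fin.mk_zero, Fin.mk_one, Matrix.cons_val_zero,
            Matrix.cons_val_one, Matrix.head_cons]
          exact (mem_homogeneousSubmodule _ _).mp
            ((homogeneousSubmodule (Fin 2) ℂ 1).smul_mem _
              ((mem_homogeneousSubmodule _ _).mpr (isHomogeneous_X ℂ _)))

/-- The representation of `D_n` on the degree-`d` homogeneous component `S_d` of
`S = ℂ[X,Y]`. -/
def homRep (n : ℕ) [NeZero n] (ζ : ℂ) (h1 : ζ ^ n = 1) (d : ℕ) :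
    Representation ℂ (DihedralGroup n) (homogeneousSubmodule (Fin 2) ℂ d) where
  toFun g := LinearMap.restrict (polyRep n ζ h1 g)
    (p := homogeneousSubmodule (Fin 2) ℂ d) (q := homogeneousSubmodule (Fin 2) ℂ d)
    (fun f hf => (mem_homogeneousSubmodule _ _).mpr
      (polyAct_isHomogeneous n ζ g ((mem_homogeneousSubmodule _ _).mp hf)))
  map_one' := by
    refine LinearMap.ext fun x => Subtype.ext ?_
    simp only [LinearMap.restrict_apply, map_one, Module.End.one_apply]
  map_mul' g h := by
    refine LinearMap.ext fun x => Subtype.ext ?_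
    simp only [LinearMap.restrict_apply, map_mul, Module.End.mul_apply]


/-! ### Auxiliary machinery -/

/-- The exponent Finsupp `(s, t)` on `Fin 2`. -/
def ex (s t : ℕ) : Fin 2 →₀ ℕ := Finsupp.single 0 s + Finsupp.single 1 t

@[simp] lemma ex_zero (s t : ℕ) : ex s t 0 = s := by
  simp [ex, Finsupp.single_apply]

@[simp] lemma ex_one (s t : ℕ) : ex s t 1 = t := by
  simp [ex, Finsupp.single_apply]

lemma eq_ex (m : Fin 2 →₀ ℕ) : m = ex (m 0) (m 1) := by
  ext i; fin_cases i <;> simp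

lemma ex_inj {s t s' t' : ℕ} (h : ex s t = ex s' t') : s = s' ∧ t = t' := by
  constructor
  · have := congrArg (fun m => m 0) h; simpa using this
  · have := congrArg (fun m => m 1) h; simpa using this

lemma degree_ex (s t : ℕ) : Finsupp.degree (ex s t) = s + t := by
  rw [Finsupp.degree_apply, Finset.sum_subset (Finset.subset_univ _)
    (fun i _ h => Finsupp.notMem_support_iff.mp h), Fin.sum_univ_two, ex_zero, ex_one]

lemma degree_fin2 (m : Fin 2 →₀ ℕ) : Finsupp.degree m = m 0 + m 1 := by
  rw [Finsupp.degree_apply, Finset.sum_subset (Finset.subset_univ _)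
    (fun i _ h => Finsupp.notMem_support_iff.mp h), Fin.sum_univ_two]

lemma monomial_ex_eq (s t : ℕ) (c : ℂ) :
    (monomial (ex s t) c : MvPolynomial (Fin 2) ℂ) = c • (X 0 ^ s * X 1 ^ t) := by
  rw [monomial_eq, Finsupp.prod_fintype _ _ (fun i => pow_zero _), Fin.prod_univ_two]
  simp [C_mul', ex]

lemma coeff_aeval_smulX (α β : ℂ) (f : MvPolynomial (Fin 2) ℂ) (m : Fin 2 →₀ ℕ) :
    coeff m (aeval ![α • X 0, β • X 1] f) = α ^ (m 0) * β ^ (m 1) * coeff m f := by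
  induction f using MvPolynomial.induction_on' with
  | add p q hp hq => rw [map_add, coeff_add, hp, hq, coeff_add, mul_add]
  | monomial m' c =>
    rw [aeval_monomial]
    have hprod : (m'.prod fun i k => (![α • X 0, β • X 1] i) ^ k)
        = (α • X 0 : MvPolynomial (Fin 2) ℂ) ^ (m' 0) * (β • X 1) ^ (m' 1) := by
      rw [Finsupp.prod_fintype _ _ (fun i => pow_zero _), Fin.prod_univ_two]
      rfl
    rw [hprod, smul_pow, smul_pow]
    have key : (algebraMap ℂ (MvPolynomial (Fin 2) ℂ)) c *
        (α ^ m' 0 • X 0 ^ m' 0 * β ^ m' 1 • X 1 ^ m' 1)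
        = (c * (α ^ m' 0 * β ^ m' 1)) • (X 0 ^ m' 0 * X 1 ^ m' 1) := by
      rw [algebraMap_eq, C_mul', smul_mul_smul_comm, smul_smul]
    rw [key, ← monomial_ex_eq, ← eq_ex m', coeff_monomial, coeff_monomial]
    by_cases h : m' = m
    · subst h; rw [if_pos rfl, if_pos rfl]; ring
    · rw [if_neg h, if_neg h, mul_zero]

lemma coeff_aeval_swapX (α β : ℂ) (f : MvPolynomial (Fin 2) ℂ) (m : Fin 2 →₀ ℕ) :
    coeff m (aeval ![α • X 1, β • X 0] f) = α ^ (m 1) * β ^ (m 0) * coeff (ex (m 1) (m 0)) f := by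
  induction f using MvPolynomial.induction_on' with
  | add p q hp hq => rw [map_add, coeff_add, hp, hq, coeff_add, mul_add]
  | monomial m' c =>
    rw [aeval_monomial]
    have hprod : (m'.prod fun i k => (![α • X 1, β • X 0] i) ^ k)
        = (α • X 1 : MvPolynomial (Fin 2) ℂ) ^ (m' 0) * (β • X 0) ^ (m' 1) := by
      rw [Finsupp.prod_fintype _ _ (fun i => pow_zero _), Fin.prod_univ_two]
      rfl
    rw [hprod, smul_pow, smul_pow]
    have key : (algebraMap ℂ (MvPolynomial (Fin 2) ℂ)) c *
        (α ^ m' 0 • X 1 ^ m' 0 * β ^ m' 1 • X 0 ^ m' 1)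
        = (c * (α ^ m' 0 * β ^ m' 1)) • (X 0 ^ m' 1 * X 1 ^ m' 0) := by
      rw [algebraMap_eq, C_mul', smul_mul_smul_comm, smul_smul,
        mul_comm (X 1 ^ m' 0)]
    rw [key, ← monomial_ex_eq, coeff_monomial, coeff_monomial]
    by_cases h : ex (m' 1) (m' 0) = m
    · have h0 : m 0 = m' 1 := by rw [← h]; simp
      have h1 : m 1 = m' 0 := by rw [← h]; simp
      rw [if_pos h, if_pos (by rw [h0, h1]; exact eq_ex m'), h0, h1]
      ring
    · rw [if_neg h, if_neg, mul_zero]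
      intro hc
      apply h
      have h0 : m' 0 = m 1 := by rw [hc]; simp
      have h1 : m' 1 = m 0 := by rw [hc]; simp
      rw [h1, h0]
      exact (eq_ex m).symm

variable {n : ℕ} [NeZero n] {ζ : ℂ}

lemma coeff_polyAct_r1 (hn3 : 3 ≤ n) (hζ0 : ζ ≠ 0) (f : MvPolynomial (Fin 2) ℂ)
    (m : Fin 2 →₀ ℕ) :
    coeff m (polyAct n ζ (DihedralGroup.r 1) f) = ζ ^ ((m 0 : ℤ) - (m 1 : ℤ)) * coeff m f := by
  haveI : Fact (1 < n) := ⟨by omega⟩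
  have : polyAct n ζ (DihedralGroup.r 1) f
      = aeval ![(ζ ^ (((1 : ZMod n).val : ℤ))) • X 0, (ζ ^ (-((1 : ZMod n).val : ℤ))) • X 1] f :=
    rfl
  rw [this, coeff_aeval_smulX, ZMod.val_one]
  congr 1
  rw [← zpow_natCast (ζ ^ ((1 : ℕ) : ℤ)), ← zpow_natCast (ζ ^ (-((1 : ℕ) : ℤ))), ← zpow_mul,
    ← zpow_mul, ← zpow_add₀ hζ0]
  congr 1
  push_cast
  ring

lemma coeff_polyAct_s0 (f : MvPolynomial (Fin 2) ℂ) (m : Fin 2 →₀ ℕ) :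
    coeff m (polyAct n ζ (DihedralGroup.sr 0) f) = coeff (ex (m 1) (m 0)) f := by
  have : polyAct n ζ (DihedralGroup.sr 0) f
      = aeval ![(ζ ^ (((0 : ZMod n).val : ℤ))) • X 1, (ζ ^ (-((0 : ZMod n).val : ℤ))) • X 0] f :=
    rfl
  rw [this, coeff_aeval_swapX, ZMod.val_zero]
  norm_num

lemma polyAct_r1_monomial (hn3 : 3 ≤ n) (h1 : ζ ^ n = 1) (s t : ℕ) (c : ℂ) :
    polyAct n ζ (DihedralGroup.r 1) (monomial (ex s t) c)
      = ζ ^ ((s : ℤ) - (t : ℤ)) • monomial (ex s t) c := by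
  have hζ0 : ζ ≠ 0 := ne_zero_of_pow_eq_one (NeZero.ne n) h1
  ext m
  rw [coeff_polyAct_r1 hn3 hζ0, coeff_smul, coeff_monomial]
  by_cases h : ex s t = m
  · have h0 : m 0 = s := by rw [← h]; simp
    have h1' : m 1 = t := by rw [← h]; simp
    rw [if_pos h, h0, h1', smul_eq_mul]
  · rw [if_neg h, mul_zero, smul_zero]

lemma polyAct_s0_monomial (s t : ℕ) (c : ℂ) :
    polyAct n ζ (DihedralGroup.sr 0) (monomial (ex s t) c) = monomial (ex t s) c := by
  ext m
  rw [coeff_polyAct_s0, coeff_monomial, coeff_monomial]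
  by_cases h : ex t s = m
  · have h0 : m 0 = t := by rw [← h]; simp
    have h1 : m 1 = s := by rw [← h]; simp
    rw [if_pos h, if_pos (by rw [h0, h1])]
  · rw [if_neg h, if_neg]
    intro hc
    apply h
    have h0 : m 1 = s := (ex_inj hc.symm).1
    have h1 : m 0 = t := (ex_inj hc.symm).2
    rw [← h0, ← h1]
    exact (eq_ex m).symm

lemma dihedral_gen {P : DihedralGroup n → Prop} (hone : P 1) (hr : P (.r 1)) (hs : P (.sr 0))
    (hmul : ∀ g h, P g → P h → P (g * h)) (g : DihedralGroup n) : P g := by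
  have hrk : ∀ k : ℕ, P (.r (k : ZMod n)) := by
    intro k
    induction k with
    | zero => rw [Nat.cast_zero, ← DihedralGroup.one_def]; exact hone
    | succ k ih =>
      have := hmul _ _ ih hr
      rw [DihedralGroup.r_mul_r] at this
      convert this using 2
      push_cast
      ring
  rcases g with j | j
  · have := hrk j.val
    rwa [ZMod.natCast_zmod_val] at this
  · have := hmul _ _ hs (hrk j.val)
    rwa [DihedralGroup.sr_mul_r, zero_add, ZMod.natCast_zmod_val] at this

/-- The subspace of `S_d` on which `r` acts by `u` and `s` acts by `ε`. -/
def vSub (h1 : ζ ^ n = 1) (d : ℕ) (u ε : ℂ) :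
    Submodule ℂ (homogeneousSubmodule (Fin 2) ℂ d) where
  carrier := {f | homRep n ζ h1 d (.r 1) f = u • f ∧ homRep n ζ h1 d (.sr 0) f = ε • f}
  add_mem' := by
    intro a b ha hb
    simp only [Set.mem_setOf_eq] at ha hb ⊢
    rw [map_add, map_add, ha.1, ha.2, hb.1, hb.2, smul_add, smul_add]
    exact ⟨rfl, rfl⟩
  zero_mem' := by simp
  smul_mem' := by
    intro c f hf
    simp only [Set.mem_setOf_eq] at hf ⊢
    rw [map_smul, map_smul, hf.1, hf.2, smul_comm, smul_comm c]
    exact ⟨rfl, rfl⟩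

/-- The subspace of `S_d` on which `r` acts by `u`. -/
def rSub (h1 : ζ ^ n = 1) (d : ℕ) (u : ℂ) :
    Submodule ℂ (homogeneousSubmodule (Fin 2) ℂ d) where
  carrier := {f | homRep n ζ h1 d (.r 1) f = u • f}
  add_mem' := by
    intro a b ha hb
    simp only [Set.mem_setOf_eq] at ha hb ⊢
    rw [map_add, ha, hb, smul_add]
  zero_mem' := by simp
  smul_mem' := by
    intro c f hf
    simp only [Set.mem_setOf_eq] at hf ⊢
    rw [map_smul, hf, smul_comm]

lemma oneDim_apply (lam : Representation ℂ (DihedralGroup n) ℂ) (g : DihedralGroup n) (c : ℂ) :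
    lam g c = c * lam g 1 := by
  have := map_smul (lam g) c (1 : ℂ)
  simpa [smul_eq_mul] using this

/-- Homs out of a one-dimensional representation. -/
def oneDimHomEquiv (h1 : ζ ^ n = 1) (d : ℕ)
    (lam : Representation ℂ (DihedralGroup n) ℂ) (u ε : ℂ)
    (hr : lam (.r 1) 1 = u) (hs : lam (.sr 0) 1 = ε) :
    (Rep.of lam ⟶ Rep.of (homRep n ζ h1 d)) ≃ₗ[ℂ] vSub h1 d u ε := by
  have hmem : ∀ (φ : Rep.of lam ⟶ Rep.of (homRep n ζ h1 d)) (g : DihedralGroup n),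
      homRep n ζ h1 d g (φ.hom (1 : ℂ)) = (lam g 1) • φ.hom (1 : ℂ) := by
    intro φ g
    have h' : φ.hom (lam g (1 : ℂ)) = homRep n ζ h1 d g (φ.hom (1 : ℂ)) :=
      Rep.hom_comm_apply φ g (1 : ℂ)
    rw [show lam g (1 : ℂ) = (lam g (1 : ℂ)) • (1 : ℂ) by simp, map_smul] at h'
    exact h'.symm
  have key : ∀ f : vSub h1 d u ε, ∀ g : DihedralGroup n,
      homRep n ζ h1 d g f.1 = (lam g 1) • f.1 := by
    intro f
    apply dihedral_gen
    · simp
    · rw [f.2.1, hr]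
    · rw [f.2.2, hs]
    · intro g h hg hh
      have hl : lam (g * h) 1 = lam h 1 * lam g 1 := by
        rw [map_mul, Module.End.mul_apply, oneDim_apply]
      rw [map_mul, Module.End.mul_apply, hh, map_smul, hg, hl, smul_smul]
  exact
  { toFun := fun φ => ⟨φ.hom (1 : ℂ), show _ ∧ _ from ⟨by rw [hmem φ, hr], by rw [hmem φ, hs]⟩⟩
    map_add' := fun φ ψ => by
      apply Subtype.ext
      show (φ + ψ).hom (1 : ℂ) = _
      rw [Rep.add_hom]
      rfl
    map_smul' := fun c φ => by
      apply Subtype.ext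
      show (c • φ).hom (1 : ℂ) = _
      rw [Rep.smul_hom]
      rfl
    invFun := fun f =>
      Rep.ofHom
      { toLinearMap := LinearMap.toSpanSingleton ℂ _ f.1
        isIntertwining' := fun g => LinearMap.ext fun z => by
          show (LinearMap.toSpanSingleton ℂ _ f.1) (lam g z) = homRep n ζ h1 d g (z • f.1)
          rw [LinearMap.toSpanSingleton_apply, oneDim_apply, map_smul, key f g, mul_smul] }
    left_inv := fun φ => by
      apply Rep.hom_ext
      refine Representation.IntertwiningMap.ext (LinearMap.ext_ring ?_)
      show (1 : ℂ) • φ.hom (1 : ℂ) = φ.hom (1 : ℂ)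
      rw [one_smul]
    right_inv := fun f => by
      apply Subtype.ext
      show (1 : ℂ) • f.1 = f.1
      rw [one_smul] }

/-- The linear map `(Fin 2 → ℂ) →ₗ W` sending `v ↦ v 0 • x + v 1 • y`. -/
def proj2Map {W : Type*} [AddCommGroup W] [Module ℂ W] (x y : W) :
    (Fin 2 → ℂ) →ₗ[ℂ] W :=
  (LinearMap.proj (0 : Fin 2) : (Fin 2 → ℂ) →ₗ[ℂ] ℂ).smulRight x
    + (LinearMap.proj (1 : Fin 2) : (Fin 2 → ℂ) →ₗ[ℂ] ℂ).smulRight y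

lemma proj2Map_apply {W : Type*} [AddCommGroup W] [Module ℂ W] (x y : W) (v : Fin 2 → ℂ) :
    proj2Map x y v = v 0 • x + v 1 • y := by
  simp [proj2Map]

lemma chiMat_r1 (hn3 : 3 ≤ n) (mm : ℤ) :
    chiMat n ζ mm (.r 1) = !![ζ ^ mm, 0; 0, ζ ^ (-mm)] := by
  haveI : Fact (1 < n) := ⟨by omega⟩
  have hval : (((1 : ZMod n).val : ℤ)) = 1 := by rw [ZMod.val_one]; norm_num
  show !![ζ ^ (mm * ((1 : ZMod n).val : ℤ)), 0; 0, ζ ^ (-(mm * ((1 : ZMod n).val : ℤ)))] = _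
  rw [hval, mul_one]

lemma chiMat_s0 (mm : ℤ) :
    chiMat n ζ mm (.sr 0) = !![0, 1; 1, 0] := by
  have hval : (((0 : ZMod n).val : ℤ)) = 0 := by rw [ZMod.val_zero]; norm_num
  show !![0, ζ ^ (-(mm * ((0 : ZMod n).val : ℤ))); ζ ^ (mm * ((0 : ZMod n).val : ℤ)), 0] = _
  rw [hval, mul_zero, neg_zero, zpow_zero]

lemma chi_r1_apply (h1 : ζ ^ n = 1) (hn3 : 3 ≤ n) (mm : ℤ) (v : Fin 2 → ℂ) :
    chiRep n ζ h1 mm (.r 1) v = ![ζ ^ mm * v 0, ζ ^ (-mm) * v 1] := by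
  show (chiMat n ζ mm (.r 1)).mulVecLin v = _
  rw [chiMat_r1 hn3]
  funext j
  fin_cases j <;>
    simp [Matrix.mulVecLin_apply, Matrix.mulVec, dotProduct, Fin.sum_univ_two]

lemma chi_s0_apply (h1 : ζ ^ n = 1) (mm : ℤ) (v : Fin 2 → ℂ) :
    chiRep n ζ h1 mm (.sr 0) v = ![v 1, v 0] := by
  show (chiMat n ζ mm (.sr 0)).mulVecLin v = _
  rw [chiMat_s0]
  funext j
  fin_cases j <;>
    simp [Matrix.mulVecLin_apply, Matrix.mulVec, dotProduct, Fin.sum_univ_two]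

/-- Homs out of the two-dimensional representation `χ_m`. -/
def twoDimHomEquiv (h1 : ζ ^ n = 1) (hn3 : 3 ≤ n) (d : ℕ) (mm : ℤ) :
    (Rep.of (chiRep n ζ h1 mm) ⟶ Rep.of (homRep n ζ h1 d)) ≃ₗ[ℂ] rSub h1 d (ζ ^ mm) := by
  have hζ0 : ζ ≠ 0 := ne_zero_of_pow_eq_one (NeZero.ne n) h1
  have hchi_r1_e0 : chiRep n ζ h1 mm (.r 1) ![1, 0] = ζ ^ mm • ![1, 0] := by
    rw [chi_r1_apply h1 hn3]
    funext j; fin_cases j <;> simp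
  have hchi_s0_e0 : chiRep n ζ h1 mm (.sr 0) ![1, 0] = ![0, 1] := by
    rw [chi_s0_apply h1]
    funext j; fin_cases j <;> simp
  have hv : ∀ v : Fin 2 → ℂ, v = v 0 • ![(1 : ℂ), 0] + v 1 • ![0, 1] := by
    intro v; funext j; fin_cases j <;> simp
  have krinv : ∀ f : homogeneousSubmodule (Fin 2) ℂ d,
      homRep n ζ h1 d (.r 1) f = ζ ^ mm • f →
      homRep n ζ h1 d (.r (-1)) f = ζ ^ (-mm) • f := by
    intro f kr
    have h0 : (DihedralGroup.r (-1) : DihedralGroup n) * .r 1 = 1 := by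
      rw [DihedralGroup.r_mul_r, neg_add_cancel, DihedralGroup.one_def]
    have hc : homRep n ζ h1 d (.r (-1)) (homRep n ζ h1 d (.r 1) f) = f := by
      rw [← Module.End.mul_apply, ← map_mul, h0, map_one, Module.End.one_apply]
    rw [kr, map_smul] at hc
    calc homRep n ζ h1 d (.r (-1)) f
        = (ζ ^ (-mm) * ζ ^ mm) • homRep n ζ h1 d (.r (-1)) f := by
          rw [← zpow_add₀ hζ0, neg_add_cancel, zpow_zero, one_smul]
      _ = ζ ^ (-mm) • (ζ ^ mm • homRep n ζ h1 d (.r (-1)) f) := by rw [mul_smul]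
      _ = ζ ^ (-mm) • f := by rw [hc]
  have ks : ∀ f : homogeneousSubmodule (Fin 2) ℂ d,
      homRep n ζ h1 d (.r 1) f = ζ ^ mm • f →
      homRep n ζ h1 d (.r 1) (homRep n ζ h1 d (.sr 0) f)
        = ζ ^ (-mm) • homRep n ζ h1 d (.sr 0) f := by
    intro f kr
    have h0 : (DihedralGroup.r 1 : DihedralGroup n) * .sr 0 = .sr 0 * .r (-1) := by
      rw [DihedralGroup.r_mul_sr, DihedralGroup.sr_mul_r, zero_sub, zero_add]
    rw [← Module.End.mul_apply, ← map_mul, h0, map_mul, Module.End.mul_apply, krinv f kr,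
      map_smul]
  have ss : ∀ f : homogeneousSubmodule (Fin 2) ℂ d,
      homRep n ζ h1 d (.sr 0) (homRep n ζ h1 d (.sr 0) f) = f := by
    intro f
    have h0 : (DihedralGroup.sr 0 : DihedralGroup n) * .sr 0 = 1 := by
      rw [DihedralGroup.sr_mul_sr, sub_self, DihedralGroup.one_def]
    rw [← Module.End.mul_apply, ← map_mul, h0, map_one, Module.End.one_apply]
  exact
  { toFun := fun φ => ⟨φ.hom ![1, 0], by
      have h' : φ.hom (chiRep n ζ h1 mm (.r 1) ![1, 0])
          = homRep n ζ h1 d (.r 1) (φ.hom ![1, 0]) :=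
        Rep.hom_comm_apply φ (.r 1) ![1, 0]
      rw [hchi_r1_e0, map_smul] at h'
      exact h'.symm⟩
    map_add' := fun φ ψ => by
      apply Subtype.ext
      show (φ + ψ).hom ![1, 0] = _
      rw [Rep.add_hom]
      rfl
    map_smul' := fun c φ => by
      apply Subtype.ext
      show (c • φ).hom ![1, 0] = _
      rw [Rep.smul_hom]
      rfl
    invFun := fun f =>
      Rep.ofHom
      { toLinearMap := proj2Map f.1 (homRep n ζ h1 d (.sr 0) f.1)
        isIntertwining' := fun g => by
          have hP : ∀ g : DihedralGroup n, ∀ v : Fin 2 → ℂ,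
              (chiRep n ζ h1 mm g v) 0 • f.1
                + (chiRep n ζ h1 mm g v) 1 • homRep n ζ h1 d (.sr 0) f.1
              = homRep n ζ h1 d g
                  (v 0 • f.1 + v 1 • homRep n ζ h1 d (.sr 0) f.1) := by
            apply dihedral_gen
            · intro v; simp
            · intro v
              rw [chi_r1_apply h1 hn3, map_add, map_smul, map_smul, f.2, ks f.1 f.2]
              show (ζ ^ mm * v 0) • f.1
                  + (ζ ^ (-mm) * v 1) • homRep n ζ h1 d (.sr 0) f.1 = _
              rw [mul_smul, mul_smul, smul_comm (v 0), smul_comm (v 1)]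
            · intro v
              rw [chi_s0_apply h1, map_add, map_smul, map_smul, ss f.1]
              show v 1 • f.1 + v 0 • homRep n ζ h1 d (.sr 0) f.1 = _
              rw [add_comm]
            · intro g h hg hh v
              rw [map_mul, Module.End.mul_apply, map_mul, Module.End.mul_apply, ← hh v]
              exact hg (chiRep n ζ h1 mm h v)
          refine LinearMap.ext fun v => ?_
          show proj2Map f.1 (homRep n ζ h1 d (.sr 0) f.1) (chiRep n ζ h1 mm g v)
            = homRep n ζ h1 d g (proj2Map f.1 (homRep n ζ h1 d (.sr 0) f.1) v)
          rw [proj2Map_apply, proj2Map_apply]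
          exact hP g v }
    left_inv := fun φ => by
      apply Rep.hom_ext
      refine Representation.IntertwiningMap.ext (LinearMap.ext fun v => ?_)
      have hs0 : homRep n ζ h1 d (.sr 0) (φ.hom ![1, 0]) = φ.hom ![0, 1] := by
        have h' : φ.hom (chiRep n ζ h1 mm (.sr 0) ![1, 0])
            = homRep n ζ h1 d (.sr 0) (φ.hom ![1, 0]) :=
          Rep.hom_comm_apply φ (.sr 0) ![1, 0]
        rw [hchi_s0_e0] at h'
        exact h'.symm
      show proj2Map (φ.hom ![1, 0]) (homRep n ζ h1 d (.sr 0) (φ.hom ![1, 0])) v = φ.hom v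
      rw [proj2Map_apply, hs0]
      conv_rhs => rw [hv v]
      rw [map_add, map_smul, map_smul]
    right_inv := fun f => by
      apply Subtype.ext
      show (proj2Map f.1 (homRep n ζ h1 d (.sr 0) f.1) ![1, 0] :
        homogeneousSubmodule (Fin 2) ℂ d) = f.1
      rw [proj2Map_apply]
      show (1 : ℂ) • f.1 + (0 : ℂ) • homRep n ζ h1 d (.sr 0) f.1 = f.1
      rw [one_smul, zero_smul, add_zero] }

lemma zpow_eq_zpow_iff (hζ : IsPrimitiveRoot ζ n) {x y : ℤ} :
    ζ ^ x = ζ ^ y ↔ (n : ℤ) ∣ x - y := by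
  have hζ0 : ζ ≠ 0 := ne_zero_of_pow_eq_one (NeZero.ne n) hζ.pow_eq_one
  rw [← hζ.zpow_eq_one_iff_dvd, zpow_sub₀ hζ0, div_eq_one_iff_eq (zpow_ne_zero _ hζ0)]

lemma solFinite (n k d : ℕ) (hn : n ≠ 0) :
    Finite {p : ℕ × ℕ // 2 * p.1 + n * p.2 + k = d} := by
  have key : ∀ a b : ℕ, 2 * a + n * b + k = d → a < d + 1 ∧ b < d + 1 := by
    intro a b h
    have hb : b ≤ n * b := Nat.le_mul_of_pos_left b (Nat.pos_of_ne_zero hn)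
    generalize hnb : n * b = t at h hb
    omega
  apply Finite.of_injective
    (fun p => ((⟨p.1.1, (key p.1.1 p.1.2 p.2).1⟩ : Fin (d + 1)),
      (⟨p.1.2, (key p.1.1 p.1.2 p.2).2⟩ : Fin (d + 1))))
  intro p q h
  apply Subtype.ext
  apply Prod.ext
  · simpa using congrArg (fun x => x.1.val) h
  · simpa using congrArg (fun x => x.2.val) h

set_option synthInstance.maxHeartbeats 800000 in
set_option maxHeartbeats 1000000 in
/-- Dimension of a subspace of `S_d` with an explicit "monomial coefficient" basis. -/
lemma finrank_eq_card_of_recon {d : ℕ} (V : Submodule ℂ (homogeneousSubmodule (Fin 2) ℂ d))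
    {ι : Type} [Fintype ι] [DecidableEq ι] (mexp : ι → (Fin 2 →₀ ℕ)) (g : ι → V)
    (hδ : ∀ p q : ι,
      coeff (mexp q) (((g p : homogeneousSubmodule (Fin 2) ℂ d)) : MvPolynomial (Fin 2) ℂ)
        = if p = q then 1 else 0)
    (hrec : ∀ f : V, ((f : homogeneousSubmodule (Fin 2) ℂ d) : MvPolynomial (Fin 2) ℂ)
      = ∑ p, coeff (mexp p) ((f : homogeneousSubmodule (Fin 2) ℂ d) : MvPolynomial (Fin 2) ℂ)
          • ((g p : homogeneousSubmodule (Fin 2) ℂ d) : MvPolynomial (Fin 2) ℂ)) :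
    Module.finrank ℂ V = Fintype.card ι := by
  classical
  let j : V →ₗ[ℂ] MvPolynomial (Fin 2) ℂ :=
    (homogeneousSubmodule (Fin 2) ℂ d).subtype.comp V.subtype
  have hj : ∀ f : V, j f = ((f : homogeneousSubmodule (Fin 2) ℂ d) : MvPolynomial (Fin 2) ℂ) :=
    fun f => rfl
  have hj_inj : Function.Injective j := fun a b h => by
    apply Subtype.ext
    apply Subtype.ext
    exact h
  let T : V →ₗ[ℂ] (ι → ℂ) := LinearMap.pi (fun p => (lcoeff ℂ (mexp p)).comp j)
  let U : (ι → ℂ) →ₗ[ℂ] V := ∑ p, (LinearMap.proj p : (ι → ℂ) →ₗ[ℂ] ℂ).smulRight (g p)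
  have hU : ∀ c : ι → ℂ, U c = ∑ p, c p • g p := by
    intro c
    show (∑ p, (LinearMap.proj p : (ι → ℂ) →ₗ[ℂ] ℂ).smulRight (g p)) c = _
    rw [LinearMap.sum_apply]
    exact Finset.sum_congr rfl fun p _ => rfl
  have hT : ∀ (f : V) (p : ι), T f p = coeff (mexp p) (j f) := fun f p => rfl
  have h₁ : T.comp U = LinearMap.id := by
    refine LinearMap.ext fun c => funext fun p => ?_
    show T (U c) p = c p
    rw [hT, hU, map_sum]
    rw [show (∑ q, j (c q • g q)) = ∑ q, c q • j (g q) from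
      Finset.sum_congr rfl fun q _ => map_smul j (c q) (g q)]
    rw [coeff_sum]
    have heach : ∀ q : ι, coeff (mexp p) (c q • j (g q)) = if q = p then c q else 0 := by
      intro q
      rw [coeff_smul, hj, hδ q p, smul_eq_mul]
      by_cases h : q = p
      · rw [if_pos h, if_pos h, mul_one]
      · rw [if_neg h, if_neg h, mul_zero]
    rw [Finset.sum_congr rfl fun q _ => heach q, Finset.sum_ite_eq' Finset.univ p c,
      if_pos (Finset.mem_univ p)]
  have h₂ : U.comp T = LinearMap.id := by
    refine LinearMap.ext fun f => ?_
    show U (T f) = f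
    apply hj_inj
    rw [hU, map_sum]
    rw [show (∑ q, j (T f q • g q)) = ∑ q, T f q • j (g q) from
      Finset.sum_congr rfl fun q _ => map_smul j (T f q) (g q)]
    calc (∑ q, T f q • j (g q))
        = ∑ q, coeff (mexp q) ((f : homogeneousSubmodule (Fin 2) ℂ d) : MvPolynomial (Fin 2) ℂ)
            • ((g q : homogeneousSubmodule (Fin 2) ℂ d) : MvPolynomial (Fin 2) ℂ) := by
          exact Finset.sum_congr rfl fun q _ => by rw [hT, hj, hj]
      _ = ((f : homogeneousSubmodule (Fin 2) ℂ d) : MvPolynomial (Fin 2) ℂ) := (hrec f).symm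
      _ = j f := (hj f).symm
  have e : V ≃ₗ[ℂ] (ι → ℂ) := LinearEquiv.ofLinear T U h₁ h₂
  rw [LinearEquiv.finrank_eq e, Module.finrank_pi ℂ]

lemma homRep_val (h1 : ζ ^ n = 1) (d : ℕ) (g : DihedralGroup n)
    (F : homogeneousSubmodule (Fin 2) ℂ d) :
    (homRep n ζ h1 d g F : MvPolynomial (Fin 2) ℂ) = polyAct n ζ g (F : MvPolynomial (Fin 2) ℂ) :=
  rfl

set_option maxHeartbeats 1000000 in
lemma chi_case (hζ : IsPrimitiveRoot ζ n) (hn3 : 3 ≤ n) (d i : ℕ)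
    (hi1 : 1 ≤ i) (hi2 : i ≤ (n - 1) / 2) :
    Module.finrank ℂ (rSub hζ.pow_eq_one d (ζ ^ (i : ℤ)))
      = Nat.card {p : ℕ × ℕ // 2 * p.1 + n * p.2 + i = d}
        + Nat.card {p : ℕ × ℕ // 2 * p.1 + n * p.2 + (n - i) = d} := by
  classical
  have h1 := hζ.pow_eq_one
  have hn0 : n ≠ 0 := NeZero.ne n
  have hζ0 : ζ ≠ 0 := ne_zero_of_pow_eq_one hn0 h1
  have hin : i ≤ n := by omega
  have hinZ : ((n - i : ℕ) : ℤ) = (n : ℤ) - i := by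
    omega
  haveI : Finite {p : ℕ × ℕ // 2 * p.1 + n * p.2 + i = d} := solFinite n i d hn0
  haveI : Finite {p : ℕ × ℕ // 2 * p.1 + n * p.2 + (n - i) = d} := solFinite n (n - i) d hn0
  letI : Fintype {p : ℕ × ℕ // 2 * p.1 + n * p.2 + i = d} := Fintype.ofFinite _
  letI : Fintype {p : ℕ × ℕ // 2 * p.1 + n * p.2 + (n - i) = d} := Fintype.ofFinite _
  set A := {p : ℕ × ℕ // 2 * p.1 + n * p.2 + i = d} with hA
  set B := {p : ℕ × ℕ // 2 * p.1 + n * p.2 + (n - i) = d} with hB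
  set mexp : A ⊕ B → (Fin 2 →₀ ℕ) :=
    Sum.elim (fun p => ex (p.1.1 + n * p.1.2 + i) p.1.1)
      (fun p => ex p.1.1 (p.1.1 + n * p.1.2 + (n - i))) with hmexp
  -- degrees
  have hdeg_mexp : ∀ p, Finsupp.degree (mexp p) = d := by
    rintro (p | p)
    · show Finsupp.degree (ex (p.1.1 + n * p.1.2 + i) p.1.1) = d
      rw [degree_ex]
      have := p.2
      linarith [p.2]
    · show Finsupp.degree (ex p.1.1 (p.1.1 + n * p.1.2 + (n - i))) = d
      rw [degree_ex]
      linarith [p.2]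
  -- injectivity of mexp
  have hinj : Function.Injective mexp := by
    rintro (p | p) (q | q) h
    · obtain ⟨h1', h2'⟩ := ex_inj h
      have hb : p.1.2 = q.1.2 := by
        have : n * p.1.2 = n * q.1.2 := by omega
        exact Nat.eq_of_mul_eq_mul_left (Nat.pos_of_ne_zero hn0) this
      congr 1
      exact Subtype.ext (Prod.ext h2' hb)
    · obtain ⟨h1', h2'⟩ := ex_inj h
      exfalso
      have e1 : p.1.1 + n * p.1.2 + i = q.1.1 := h1'
      have e2 : p.1.1 = q.1.1 + n * q.1.2 + (n - i) := h2'
      have : i + (n - i) = n := by omega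
      linarith [e1, e2, this, Nat.zero_le (n * p.1.2), Nat.zero_le (n * q.1.2)]
    · obtain ⟨h1', h2'⟩ := ex_inj h
      exfalso
      have e1 : p.1.1 = q.1.1 + n * q.1.2 + i := h1'
      have e2 : p.1.1 + n * p.1.2 + (n - i) = q.1.1 := h2'
      have : i + (n - i) = n := by omega
      linarith [e1, e2, this, Nat.zero_le (n * p.1.2), Nat.zero_le (n * q.1.2)]
    · obtain ⟨h1', h2'⟩ := ex_inj h
      have hb : p.1.2 = q.1.2 := by
        have : n * p.1.2 = n * q.1.2 := by omega
        exact Nat.eq_of_mul_eq_mul_left (Nat.pos_of_ne_zero hn0) this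
      congr 1
      exact Subtype.ext (Prod.ext h1' hb)
  -- the basis vectors
  have hmem_r : ∀ p : A ⊕ B,
      polyAct n ζ (.r 1) (monomial (mexp p) (1 : ℂ)) = ζ ^ (i : ℤ) • monomial (mexp p) 1 := by
    rintro (p | p)
    · show polyAct n ζ (.r 1) (monomial (ex (p.1.1 + n * p.1.2 + i) p.1.1) (1 : ℂ)) = _
      rw [polyAct_r1_monomial hn3 h1]
      congr 1
      apply zpow_congr hn0 h1
      have hz : ((p.1.1 + n * p.1.2 + i : ℕ) : ℤ) - (p.1.1 : ℤ)
          = (i : ℤ) + (n : ℤ) * p.1.2 := by push_cast; ring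
      rw [hz]
      push_cast
      rw [ZMod.natCast_self]
      ring
    · show polyAct n ζ (.r 1) (monomial (ex p.1.1 (p.1.1 + n * p.1.2 + (n - i))) (1 : ℂ)) = _
      rw [polyAct_r1_monomial hn3 h1]
      congr 1
      apply zpow_congr hn0 h1
      have : (p.1.1 : ℤ) - ((p.1.1 + n * p.1.2 + (n - i) : ℕ) : ℤ)
          = (i : ℤ) - n * (p.1.2 + 1) := by
        push_cast [hinZ]
        ring
      rw [this]
      push_cast
      rw [ZMod.natCast_self]
      ring
  set gv : A ⊕ B → rSub h1 d (ζ ^ (i : ℤ)) := fun p =>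
    ⟨⟨monomial (mexp p) 1, isHomogeneous_monomial 1 (hdeg_mexp p)⟩,
      Subtype.ext (hmem_r p)⟩ with hgv
  -- delta property
  have hδ : ∀ p q : A ⊕ B,
      coeff (mexp q) ((gv p : homogeneousSubmodule (Fin 2) ℂ d) : MvPolynomial (Fin 2) ℂ)
        = if p = q then 1 else 0 := by
    intro p q
    show coeff (mexp q) (monomial (mexp p) (1 : ℂ)) = _
    rw [coeff_monomial]
    by_cases h : p = q
    · rw [if_pos (by rw [h]), if_pos h]
    · rw [if_neg (fun hc => h (hinj hc)), if_neg h]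
  -- reconstruction
  have hrec : ∀ f : rSub h1 d (ζ ^ (i : ℤ)),
      ((f : homogeneousSubmodule (Fin 2) ℂ d) : MvPolynomial (Fin 2) ℂ)
      = ∑ p, coeff (mexp p) ((f : homogeneousSubmodule (Fin 2) ℂ d) : MvPolynomial (Fin 2) ℂ)
          • ((gv p : homogeneousSubmodule (Fin 2) ℂ d) : MvPolynomial (Fin 2) ℂ) := by
    intro f
    set F : MvPolynomial (Fin 2) ℂ := ((f : homogeneousSubmodule (Fin 2) ℂ d) :
      MvPolynomial (Fin 2) ℂ) with hF
    have hhom : F.IsHomogeneous d := (f : homogeneousSubmodule (Fin 2) ℂ d).2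
    have heig : polyAct n ζ (.r 1) F = ζ ^ (i : ℤ) • F := by
      have := congrArg Subtype.val f.2
      exact this
    ext m
    rw [coeff_sum]
    have hterm : ∀ p : A ⊕ B,
        coeff m (coeff (mexp p) F • ((gv p : homogeneousSubmodule (Fin 2) ℂ d) :
          MvPolynomial (Fin 2) ℂ)) = coeff (mexp p) F * (if mexp p = m then 1 else 0) := by
      intro p
      rw [coeff_smul]
      show coeff (mexp p) F • coeff m (monomial (mexp p) (1 : ℂ)) = _
      rw [coeff_monomial, smul_eq_mul]
    rw [Finset.sum_congr rfl fun p _ => hterm p]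
    by_cases hex : ∃ p, mexp p = m
    · obtain ⟨p₀, hp₀⟩ := hex
      rw [Finset.sum_eq_single p₀]
      · rw [if_pos hp₀, mul_one, hp₀]
      · intro q _ hq
        rw [if_neg (fun hc => hq (hinj (hc.trans hp₀.symm))), mul_zero]
      · intro h
        exact absurd (Finset.mem_univ p₀) h
    · rw [Finset.sum_eq_zero (fun q _ => by
        rw [if_neg (fun hc => hex ⟨q, hc⟩), mul_zero])]
      by_cases hdeg : Finsupp.degree m = d
      · -- show coeff m F = 0
        by_contra hc
        have hc' : coeff m F ≠ 0 := fun hz => hc (by rw [hz])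
        have heq : ζ ^ ((m 0 : ℤ) - (m 1 : ℤ)) * coeff m F = ζ ^ (i : ℤ) * coeff m F := by
          rw [← coeff_polyAct_r1 hn3 hζ0, heig, coeff_smul, smul_eq_mul]
        have hzz : ζ ^ ((m 0 : ℤ) - (m 1 : ℤ)) = ζ ^ (i : ℤ) :=
          mul_right_cancel₀ hc' heq
        obtain ⟨kk, hkk⟩ := (zpow_eq_zpow_iff hζ).mp hzz
        have hdz : (m 0 : ℤ) + (m 1 : ℤ) = (d : ℤ) := by
          rw [degree_fin2] at hdeg
          exact_mod_cast hdeg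
        rcases le_or_gt 0 kk with hk0 | hk0
        · have hcond : 2 * (m 1) + n * kk.toNat + i = d := by
            have : ((2 * (m 1) + n * kk.toNat + i : ℕ) : ℤ) = (d : ℤ) := by
              push_cast [Int.toNat_of_nonneg hk0]
              linarith [hkk, hdz]
            exact_mod_cast this
          apply hex
          refine ⟨Sum.inl ⟨(m 1, kk.toNat), hcond⟩, ?_⟩
          show ex (m 1 + n * kk.toNat + i) (m 1) = m
          have hm0 : m 1 + n * kk.toNat + i = m 0 := by
            have : ((m 1 + n * kk.toNat + i : ℕ) : ℤ) = (m 0 : ℤ) := by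
              push_cast [Int.toNat_of_nonneg hk0]
              linarith [hkk]
            exact_mod_cast this
          rw [hm0]
          exact (eq_ex m).symm
        · have hk1 : (0 : ℤ) ≤ -kk - 1 := by omega
          have hcond : 2 * (m 0) + n * (-kk - 1).toNat + (n - i) = d := by
            have : ((2 * (m 0) + n * (-kk - 1).toNat + (n - i) : ℕ) : ℤ) = (d : ℤ) := by
              push_cast [Int.toNat_of_nonneg hk1, hinZ]
              linarith [hkk, hdz]
            exact_mod_cast this
          apply hex
          refine ⟨Sum.inr ⟨(m 0, (-kk - 1).toNat), hcond⟩, ?_⟩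
          show ex (m 0) (m 0 + n * (-kk - 1).toNat + (n - i)) = m
          have hm1 : m 0 + n * (-kk - 1).toNat + (n - i) = m 1 := by
            have : ((m 0 + n * (-kk - 1).toNat + (n - i) : ℕ) : ℤ) = (m 1 : ℤ) := by
              push_cast [Int.toNat_of_nonneg hk1, hinZ]
              linarith [hkk]
            exact_mod_cast this
          rw [hm1]
          exact (eq_ex m).symm
      · exact hhom.coeff_eq_zero hdeg
  have hfr := finrank_eq_card_of_recon (rSub h1 d (ζ ^ (i : ℤ))) mexp gv hδ hrec
  rw [hfr, ← Nat.card_eq_fintype_card, Nat.card_sum]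

set_option maxHeartbeats 1000000 in
lemma sgn_case (hζ : IsPrimitiveRoot ζ n) (hn3 : 3 ≤ n) (d : ℕ) :
    Module.finrank ℂ (vSub hζ.pow_eq_one d 1 (-1))
      = Nat.card {p : ℕ × ℕ // 2 * p.1 + n * p.2 + n = d} := by
  classical
  have h1 := hζ.pow_eq_one
  have hn0 : n ≠ 0 := NeZero.ne n
  have hζ0 : ζ ≠ 0 := ne_zero_of_pow_eq_one hn0 h1
  haveI : Finite {p : ℕ × ℕ // 2 * p.1 + n * p.2 + n = d} := solFinite n n d hn0
  letI : Fintype {p : ℕ × ℕ // 2 * p.1 + n * p.2 + n = d} := Fintype.ofFinite _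
  set S := {p : ℕ × ℕ // 2 * p.1 + n * p.2 + n = d} with hS
  set mexp : S → (Fin 2 →₀ ℕ) := fun p => ex (p.1.1 + n * (p.1.2 + 1)) p.1.1 with hmexp
  set sexp : S → (Fin 2 →₀ ℕ) := fun p => ex p.1.1 (p.1.1 + n * (p.1.2 + 1)) with hsexp
  have hnb1 : ∀ b : ℕ, n * (b + 1) = n * b + n := fun b => by ring
  have hdeg_m : ∀ p : S, Finsupp.degree (mexp p) = d := by
    intro p
    show Finsupp.degree (ex (p.1.1 + n * (p.1.2 + 1)) p.1.1) = d
    rw [degree_ex, hnb1]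
    linarith [p.2]
  have hdeg_s : ∀ p : S, Finsupp.degree (sexp p) = d := by
    intro p
    show Finsupp.degree (ex p.1.1 (p.1.1 + n * (p.1.2 + 1))) = d
    rw [degree_ex, hnb1]
    linarith [p.2]
  have hinj : Function.Injective mexp := by
    intro p q h
    obtain ⟨h1', h2'⟩ := ex_inj h
    have hb : p.1.2 = q.1.2 := by
      have : n * (p.1.2 + 1) = n * (q.1.2 + 1) := by omega
      have := Nat.eq_of_mul_eq_mul_left (Nat.pos_of_ne_zero hn0) this
      omega
    exact Subtype.ext (Prod.ext h2' hb)
  have hms : ∀ p q : S, sexp p ≠ mexp q := by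
    intro p q h
    obtain ⟨h1', h2'⟩ := ex_inj h
    have e1 : p.1.1 = q.1.1 + n * (q.1.2 + 1) := h1'
    have e2 : p.1.1 + n * (p.1.2 + 1) = q.1.1 := h2'
    have t1 : 0 < n * (p.1.2 + 1) := Nat.mul_pos (Nat.pos_of_ne_zero hn0) (Nat.succ_pos _)
    linarith [e1, e2, t1, Nat.zero_le (n * (q.1.2 + 1))]
  -- basis elements
  have hgr : ∀ p : S, polyAct n ζ (.r 1)
      (monomial (mexp p) (1 : ℂ) - monomial (sexp p) 1)
      = (1 : ℂ) • (monomial (mexp p) (1 : ℂ) - monomial (sexp p) 1) := by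
    intro p
    rw [one_smul, map_sub]
    show polyAct n ζ (.r 1) (monomial (ex (p.1.1 + n * (p.1.2 + 1)) p.1.1) (1 : ℂ))
      - polyAct n ζ (.r 1) (monomial (ex p.1.1 (p.1.1 + n * (p.1.2 + 1))) (1 : ℂ)) = _
    rw [polyAct_r1_monomial hn3 h1, polyAct_r1_monomial hn3 h1]
    have hz1 : ζ ^ (((p.1.1 + n * (p.1.2 + 1) : ℕ) : ℤ) - (p.1.1 : ℤ)) = ζ ^ (0 : ℤ) := by
      apply zpow_congr hn0 h1
      push_cast
      rw [ZMod.natCast_self]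
      ring
    have hz2 : ζ ^ ((p.1.1 : ℤ) - ((p.1.1 + n * (p.1.2 + 1) : ℕ) : ℤ)) = ζ ^ (0 : ℤ) := by
      apply zpow_congr hn0 h1
      push_cast
      rw [ZMod.natCast_self]
      ring
    rw [hz1, hz2, zpow_zero, one_smul, one_smul]
  have hgs : ∀ p : S, polyAct n ζ (.sr 0)
      (monomial (mexp p) (1 : ℂ) - monomial (sexp p) 1)
      = (-1 : ℂ) • (monomial (mexp p) (1 : ℂ) - monomial (sexp p) 1) := by
    intro p
    rw [map_sub]
    show polyAct n ζ (.sr 0) (monomial (ex (p.1.1 + n * (p.1.2 + 1)) p.1.1) (1 : ℂ))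
      - polyAct n ζ (.sr 0) (monomial (ex p.1.1 (p.1.1 + n * (p.1.2 + 1))) (1 : ℂ)) = _
    rw [polyAct_s0_monomial, polyAct_s0_monomial, neg_smul, one_smul, neg_sub]
  set gv : S → vSub h1 d 1 (-1) := fun p =>
    ⟨⟨monomial (mexp p) 1 - monomial (sexp p) 1,
      (isHomogeneous_monomial 1 (hdeg_m p)).sub (isHomogeneous_monomial 1 (hdeg_s p))⟩,
      Subtype.ext (hgr p), Subtype.ext (hgs p)⟩ with hgv
  have hcoeff_g : ∀ (p : S) (m : Fin 2 →₀ ℕ),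
      coeff m ((gv p : homogeneousSubmodule (Fin 2) ℂ d) : MvPolynomial (Fin 2) ℂ)
        = (if mexp p = m then 1 else 0) - (if sexp p = m then 1 else 0) := by
    intro p m
    show coeff m (monomial (mexp p) (1 : ℂ) - monomial (sexp p) 1) = _
    rw [coeff_sub, coeff_monomial, coeff_monomial]
  have hδ : ∀ p q : S,
      coeff (mexp q) ((gv p : homogeneousSubmodule (Fin 2) ℂ d) : MvPolynomial (Fin 2) ℂ)
        = if p = q then 1 else 0 := by
    intro p q
    rw [hcoeff_g, if_neg (hms p q)]
    by_cases h : p = q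
    · rw [if_pos (by rw [h]), if_pos h, sub_zero]
    · rw [if_neg (fun hc => h (hinj hc)), if_neg h, sub_zero]
  have hrec : ∀ f : vSub h1 d 1 (-1),
      ((f : homogeneousSubmodule (Fin 2) ℂ d) : MvPolynomial (Fin 2) ℂ)
      = ∑ p, coeff (mexp p) ((f : homogeneousSubmodule (Fin 2) ℂ d) : MvPolynomial (Fin 2) ℂ)
          • ((gv p : homogeneousSubmodule (Fin 2) ℂ d) : MvPolynomial (Fin 2) ℂ) := by
    intro f
    set F : MvPolynomial (Fin 2) ℂ := ((f : homogeneousSubmodule (Fin 2) ℂ d) :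
      MvPolynomial (Fin 2) ℂ) with hF
    have hhom : F.IsHomogeneous d := (f : homogeneousSubmodule (Fin 2) ℂ d).2
    have heig : polyAct n ζ (.r 1) F = F := by
      have := congrArg Subtype.val f.2.1
      rw [one_smul] at this
      exact this
    have hsym : ∀ m : Fin 2 →₀ ℕ, coeff (ex (m 1) (m 0)) F = -coeff m F := by
      intro m
      have hval : polyAct n ζ (DihedralGroup.sr 0) F = (-1 : ℂ) • F :=
        congrArg Subtype.val f.2.2
      have h2 := congrArg (coeff m) hval
      rw [coeff_polyAct_s0, coeff_smul, smul_eq_mul] at h2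
      rw [h2]
      ring
    ext m
    rw [coeff_sum]
    have hterm : ∀ p : S,
        coeff m (coeff (mexp p) F • ((gv p : homogeneousSubmodule (Fin 2) ℂ d) :
          MvPolynomial (Fin 2) ℂ))
        = coeff (mexp p) F * ((if mexp p = m then 1 else 0) - (if sexp p = m then 1 else 0)) := by
      intro p
      rw [coeff_smul, hcoeff_g, smul_eq_mul]
    rw [Finset.sum_congr rfl fun p _ => hterm p]
    have hdvd_of_m : ∀ q : S, mexp q = m → ((m 0 : ℤ) - (m 1 : ℤ)) = n * (q.1.2 + 1) := by
      intro q hq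
      have h0 : m 0 = q.1.1 + n * (q.1.2 + 1) := by rw [← hq]; simp [hmexp]
      have h1' : m 1 = q.1.1 := by rw [← hq]; simp [hmexp]
      rw [h0, h1']
      push_cast
      ring
    have hdvd_of_s : ∀ q : S, sexp q = m → ((m 0 : ℤ) - (m 1 : ℤ)) = -(n * (q.1.2 + 1)) := by
      intro q hq
      have h0 : m 0 = q.1.1 := by rw [← hq]; simp [hsexp]
      have h1' : m 1 = q.1.1 + n * (q.1.2 + 1) := by rw [← hq]; simp [hsexp]
      rw [h0, h1']
      push_cast
      ring
    by_cases hdeg : Finsupp.degree m = d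
    · have hdz : m 0 + m 1 = d := by rw [degree_fin2] at hdeg; exact hdeg
      by_cases hdvd : (n : ℤ) ∣ (m 0 : ℤ) - (m 1 : ℤ)
      · rcases Nat.lt_trichotomy (m 0) (m 1) with hlt | heq | hgt
        · -- m 0 < m 1 : representative is (m 0, k - 1) with n*k = m 1 - m 0
          have hdvd' : n ∣ m 1 - m 0 := by
            have hcast : ((m 1 - m 0 : ℕ) : ℤ) = (m 1 : ℤ) - m 0 := by omega
            have h2 : (n : ℤ) ∣ ((m 1 - m 0 : ℕ) : ℤ) := by
              rw [hcast, ← neg_sub (m 0 : ℤ) (m 1 : ℤ)]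
              exact dvd_neg.mpr hdvd
            exact_mod_cast h2
          obtain ⟨k, hk⟩ := hdvd'
          have hk1 : 1 ≤ k := by
            rcases Nat.eq_zero_or_pos k with h0 | h0
            · exfalso; rw [h0, Nat.mul_zero] at hk; omega
            · exact h0
          have hm1 : m 1 = m 0 + n * ((k - 1) + 1) := by
            have hne : (k - 1) + 1 = k := by omega
            rw [hne]
            generalize hT : n * k = T at hk
            omega
          have hcond : 2 * (m 0) + n * (k - 1) + n = d := by
            have hnk : n * ((k - 1) + 1) = n * (k - 1) + n := by ring
            rw [hnk] at hm1
            generalize hT : n * (k - 1) = T at hm1 ⊢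
            omega
          set p₀ : S := ⟨(m 0, k - 1), hcond⟩ with hp₀
          have hsx : sexp p₀ = m := by
            show ex (m 0) (m 0 + n * ((k - 1) + 1)) = m
            rw [← hm1]
            exact (eq_ex m).symm
          have hmexp₀ : mexp p₀ = ex (m 1) (m 0) := by
            show ex (m 0 + n * ((k - 1) + 1)) (m 0) = ex (m 1) (m 0)
            rw [← hm1]
          have hmx : mexp p₀ ≠ m := by
            intro hc
            rw [hmexp₀] at hc
            have := (ex_inj (hc.trans (eq_ex m))).1
            omega
          rw [Finset.sum_eq_single p₀]
          · rw [if_neg hmx, if_pos hsx, hmexp₀, hsym m]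
            ring
          · intro q _ hq
            have hq1 : mexp q ≠ m := by
              intro hc
              have h2 := hdvd_of_m q hc
              have hpos : (0 : ℤ) ≤ (n : ℤ) * ((q.1.2 : ℤ) + 1) := by positivity
              have hlt' : (m 0 : ℤ) < (m 1 : ℤ) := by exact_mod_cast hlt
              linarith
            have hq2 : sexp q ≠ m := by
              intro hc
              apply hq
              have h0 : q.1.1 = m 0 := (ex_inj (hc.trans (eq_ex m))).1
              have h1' : q.1.1 + n * (q.1.2 + 1) = m 1 := (ex_inj (hc.trans (eq_ex m))).2
              have hb : n * (q.1.2 + 1) = n * ((k - 1) + 1) := by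
                generalize hT : n * (q.1.2 + 1) = T at h1'
                generalize hU : n * ((k - 1) + 1) = U at hm1
                omega
              have hb' : q.1.2 = k - 1 :=
                Nat.succ_injective (Nat.eq_of_mul_eq_mul_left (Nat.pos_of_ne_zero hn0) hb)
              exact Subtype.ext (Prod.ext h0 hb')
            rw [if_neg hq1, if_neg hq2, sub_zero, mul_zero]
          · intro h
            exact absurd (Finset.mem_univ p₀) h
        · -- m 0 = m 1 : coefficient vanishes
          have hcm : coeff m F = 0 := by
            have hmm : ex (m 1) (m 0) = m := by
              have hx : ex (m 1) (m 0) = ex (m 0) (m 1) := by rw [heq]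
              rw [hx]
              exact (eq_ex m).symm
            have hneg := hsym m
            rw [hmm] at hneg
            have h2 : (2 : ℂ) * coeff m F = 0 := by linear_combination hneg
            exact (mul_eq_zero.mp h2).resolve_left two_ne_zero
          rw [hcm, Finset.sum_eq_zero]
          intro q _
          have hq1 : mexp q ≠ m := by
            intro hc
            have h2 := hdvd_of_m q hc
            have hpos : (0 : ℤ) < (n : ℤ) * ((q.1.2 : ℤ) + 1) := by positivity
            have heq' : (m 0 : ℤ) = (m 1 : ℤ) := by exact_mod_cast heq
            linarith
          have hq2 : sexp q ≠ m := by
            intro hc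
            have h2 := hdvd_of_s q hc
            have hpos : (0 : ℤ) < (n : ℤ) * ((q.1.2 : ℤ) + 1) := by positivity
            have heq' : (m 0 : ℤ) = (m 1 : ℤ) := by exact_mod_cast heq
            linarith
          rw [if_neg hq1, if_neg hq2, sub_zero, mul_zero]
        · -- m 0 > m 1 : representative is (m 1, k - 1) with n*k = m 0 - m 1
          have hdvd' : n ∣ m 0 - m 1 := by
            have hcast : ((m 0 - m 1 : ℕ) : ℤ) = (m 0 : ℤ) - m 1 := by omega
            have h2 : (n : ℤ) ∣ ((m 0 - m 1 : ℕ) : ℤ) := by rw [hcast]; exact hdvd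
            exact_mod_cast h2
          obtain ⟨k, hk⟩ := hdvd'
          have hk1 : 1 ≤ k := by
            rcases Nat.eq_zero_or_pos k with h0 | h0
            · exfalso; rw [h0, Nat.mul_zero] at hk; omega
            · exact h0
          have hm0 : m 0 = m 1 + n * ((k - 1) + 1) := by
            have hne : (k - 1) + 1 = k := by omega
            rw [hne]
            generalize hT : n * k = T at hk
            omega
          have hcond : 2 * (m 1) + n * (k - 1) + n = d := by
            have hnk : n * ((k - 1) + 1) = n * (k - 1) + n := by ring
            rw [hnk] at hm0
            generalize hT : n * (k - 1) = T at hm0 ⊢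
            omega
          set p₀ : S := ⟨(m 1, k - 1), hcond⟩ with hp₀
          have hmx : mexp p₀ = m := by
            show ex (m 1 + n * ((k - 1) + 1)) (m 1) = m
            rw [← hm0]
            exact (eq_ex m).symm
          have hsx : sexp p₀ ≠ m := by
            intro hc
            have h0 : m 1 = m 0 := (ex_inj (hc.trans (eq_ex m))).1
            omega
          rw [Finset.sum_eq_single p₀]
          · rw [if_pos hmx, if_neg hsx, hmx]
            ring
          · intro q _ hq
            have hq1 : mexp q ≠ m := by
              intro hc
              apply hq
              have h1' : q.1.1 + n * (q.1.2 + 1) = m 0 := (ex_inj (hc.trans (eq_ex m))).1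
              have h0 : q.1.1 = m 1 := (ex_inj (hc.trans (eq_ex m))).2
              have hb : n * (q.1.2 + 1) = n * ((k - 1) + 1) := by
                rw [h0] at h1'
                generalize hT : n * (q.1.2 + 1) = T at h1'
                generalize hU : n * ((k - 1) + 1) = U at hm0
                omega
              have hb' : q.1.2 = k - 1 :=
                Nat.succ_injective (Nat.eq_of_mul_eq_mul_left (Nat.pos_of_ne_zero hn0) hb)
              exact Subtype.ext (Prod.ext h0 hb')
            have hq2 : sexp q ≠ m := by
              intro hc
              have h2 := hdvd_of_s q hc
              have hpos : (0 : ℤ) < (n : ℤ) * ((q.1.2 : ℤ) + 1) := by positivity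
              have hgt' : (m 1 : ℤ) < (m 0 : ℤ) := by exact_mod_cast hgt
              linarith
            rw [if_neg hq1, if_neg hq2, sub_zero, mul_zero]
          · intro h
            exact absurd (Finset.mem_univ p₀) h
      · -- no divisibility : coefficient vanishes
        have hcm : coeff m F = 0 := by
          by_contra hc
          have heq : ζ ^ ((m 0 : ℤ) - (m 1 : ℤ)) * coeff m F = coeff m F := by
            rw [← coeff_polyAct_r1 hn3 hζ0, heig]
          have hzz : ζ ^ ((m 0 : ℤ) - (m 1 : ℤ)) = ζ ^ (0 : ℤ) := by
            rw [zpow_zero]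
            exact mul_right_cancel₀ hc (by rw [heq, one_mul])
          have := (zpow_eq_zpow_iff hζ).mp hzz
          rw [sub_zero] at this
          exact hdvd this
        rw [hcm, Finset.sum_eq_zero]
        intro q _
        have hq1 : mexp q ≠ m := by
          intro hc
          exact hdvd ⟨(q.1.2 : ℤ) + 1, hdvd_of_m q hc⟩
        have hq2 : sexp q ≠ m := by
          intro hc
          exact hdvd ⟨-((q.1.2 : ℤ) + 1), by rw [hdvd_of_s q hc]; ring⟩
        rw [if_neg hq1, if_neg hq2, sub_zero, mul_zero]
    · rw [hhom.coeff_eq_zero hdeg, Finset.sum_eq_zero]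
      intro q _
      have hq1 : mexp q ≠ m := fun hc => hdeg (by rw [← hc]; exact hdeg_m q)
      have hq2 : sexp q ≠ m := fun hc => hdeg (by rw [← hc]; exact hdeg_s q)
      rw [if_neg hq1, if_neg hq2, sub_zero, mul_zero]
  have hfr := finrank_eq_card_of_recon (vSub h1 d 1 (-1)) mexp gv hδ hrec
  rw [hfr, ← Nat.card_eq_fintype_card]

set_option maxHeartbeats 1600000 in
lemma triv_case (hζ : IsPrimitiveRoot ζ n) (hn3 : 3 ≤ n) (d : ℕ) :
    Module.finrank ℂ (vSub hζ.pow_eq_one d 1 1)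
      = Nat.card {p : ℕ × ℕ // 2 * p.1 + n * p.2 = d} := by
  classical
  have h1 := hζ.pow_eq_one
  have hn0 : n ≠ 0 := NeZero.ne n
  have hζ0 : ζ ≠ 0 := ne_zero_of_pow_eq_one hn0 h1
  haveI : Finite {p : ℕ × ℕ // 2 * p.1 + n * p.2 = d} :=
    Finite.of_equiv _ (Equiv.subtypeEquivRight (q := fun p : ℕ × ℕ => 2 * p.1 + n * p.2 = d)
      (fun p => by rw [add_zero])) (h := solFinite n 0 d hn0)
  letI : Fintype {p : ℕ × ℕ // 2 * p.1 + n * p.2 = d} := Fintype.ofFinite _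
  set S := {p : ℕ × ℕ // 2 * p.1 + n * p.2 = d} with hS
  set mexp : S → (Fin 2 →₀ ℕ) := fun p => ex (p.1.1 + n * p.1.2) p.1.1 with hmexp
  set sexp : S → (Fin 2 →₀ ℕ) := fun p => ex p.1.1 (p.1.1 + n * p.1.2) with hsexp
  set gpoly : S → MvPolynomial (Fin 2) ℂ := fun p =>
    if p.1.2 = 0 then monomial (mexp p) 1
    else monomial (mexp p) 1 + monomial (sexp p) 1 with hgpoly
  have hgp0 : ∀ p : S, p.1.2 = 0 → gpoly p = monomial (mexp p) 1 := by
    intro p hb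
    show (if p.1.2 = 0 then monomial (mexp p) 1
      else monomial (mexp p) 1 + monomial (sexp p) 1) = _
    rw [if_pos hb]
  have hgp1 : ∀ p : S, p.1.2 ≠ 0 →
      gpoly p = monomial (mexp p) 1 + monomial (sexp p) 1 := by
    intro p hb
    show (if p.1.2 = 0 then monomial (mexp p) 1
      else monomial (mexp p) 1 + monomial (sexp p) 1) = _
    rw [if_neg hb]
  have hdeg_m : ∀ p : S, Finsupp.degree (mexp p) = d := by
    intro p
    show Finsupp.degree (ex (p.1.1 + n * p.1.2) p.1.1) = d
    rw [degree_ex]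
    linarith [p.2]
  have hdeg_s : ∀ p : S, Finsupp.degree (sexp p) = d := by
    intro p
    show Finsupp.degree (ex p.1.1 (p.1.1 + n * p.1.2)) = d
    rw [degree_ex]
    linarith [p.2]
  have hinj : Function.Injective mexp := by
    intro p q h
    obtain ⟨h1', h2'⟩ := ex_inj h
    have hb : p.1.2 = q.1.2 := by
      have : n * p.1.2 = n * q.1.2 := by omega
      exact Nat.eq_of_mul_eq_mul_left (Nat.pos_of_ne_zero hn0) this
    exact Subtype.ext (Prod.ext h2' hb)
  have hms : ∀ p q : S, p.1.2 ≠ 0 → sexp p ≠ mexp q := by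
    intro p q hb h
    obtain ⟨h1', h2'⟩ := ex_inj h
    have e1 : p.1.1 = q.1.1 + n * q.1.2 := h1'
    have e2 : p.1.1 + n * p.1.2 = q.1.1 := h2'
    have t1 : 0 < n * p.1.2 := Nat.mul_pos (Nat.pos_of_ne_zero hn0) (Nat.pos_of_ne_zero hb)
    linarith [e1, e2, t1, Nat.zero_le (n * q.1.2)]
  -- eigen-properties of the basis polynomials
  have hmono_r : ∀ (s t : ℕ), (n : ℤ) ∣ ((s : ℤ) - (t : ℤ)) →
      polyAct n ζ (.r 1) (monomial (ex s t) (1 : ℂ)) = monomial (ex s t) 1 := by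
    intro s t hd
    rw [polyAct_r1_monomial hn3 h1]
    have hz : ζ ^ ((s : ℤ) - (t : ℤ)) = ζ ^ (0 : ℤ) := by
      apply zpow_congr hn0 h1
      obtain ⟨c, hc⟩ := hd
      rw [hc]
      push_cast
      rw [ZMod.natCast_self]
      ring
    rw [hz, zpow_zero, one_smul]
  have hgr : ∀ p : S, polyAct n ζ (.r 1) (gpoly p) = (1 : ℂ) • gpoly p := by
    intro p
    rw [one_smul]
    have hd1 : (n : ℤ) ∣ (((p.1.1 + n * p.1.2 : ℕ) : ℤ) - (p.1.1 : ℤ)) :=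
      ⟨(p.1.2 : ℤ), by push_cast; ring⟩
    have hd2 : (n : ℤ) ∣ ((p.1.1 : ℤ) - ((p.1.1 + n * p.1.2 : ℕ) : ℤ)) :=
      ⟨-(p.1.2 : ℤ), by push_cast; ring⟩
    by_cases hb : p.1.2 = 0
    · rw [hgp0 p hb]
      exact hmono_r _ _ hd1
    · rw [hgp1 p hb, map_add]
      show polyAct n ζ (.r 1) (monomial (ex (p.1.1 + n * p.1.2) p.1.1) (1 : ℂ))
        + polyAct n ζ (.r 1) (monomial (ex p.1.1 (p.1.1 + n * p.1.2)) (1 : ℂ)) = _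
      rw [hmono_r _ _ hd1, hmono_r _ _ hd2]
  have hgs : ∀ p : S, polyAct n ζ (.sr 0) (gpoly p) = (1 : ℂ) • gpoly p := by
    intro p
    rw [one_smul]
    by_cases hb : p.1.2 = 0
    · rw [hgp0 p hb]
      show polyAct n ζ (.sr 0) (monomial (ex (p.1.1 + n * p.1.2) p.1.1) (1 : ℂ)) = _
      rw [polyAct_s0_monomial]
      have hz : p.1.1 + n * p.1.2 = p.1.1 := by rw [hb, Nat.mul_zero, Nat.add_zero]
      show monomial (ex p.1.1 (p.1.1 + n * p.1.2)) (1 : ℂ)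
        = monomial (ex (p.1.1 + n * p.1.2) p.1.1) 1
      rw [hz]
    · rw [hgp1 p hb, map_add]
      show polyAct n ζ (.sr 0) (monomial (ex (p.1.1 + n * p.1.2) p.1.1) (1 : ℂ))
        + polyAct n ζ (.sr 0) (monomial (ex p.1.1 (p.1.1 + n * p.1.2)) (1 : ℂ)) = _
      rw [polyAct_s0_monomial, polyAct_s0_monomial, add_comm]
  have hghom : ∀ p : S, (gpoly p).IsHomogeneous d := by
    intro p
    by_cases hb : p.1.2 = 0
    · rw [hgp0 p hb]
      exact isHomogeneous_monomial 1 (hdeg_m p)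
    · rw [hgp1 p hb]
      exact (isHomogeneous_monomial 1 (hdeg_m p)).add (isHomogeneous_monomial 1 (hdeg_s p))
  set gv : S → vSub h1 d 1 1 := fun p =>
    ⟨⟨gpoly p, hghom p⟩, Subtype.ext (hgr p), Subtype.ext (hgs p)⟩ with hgv
  have hw0 : ∀ p : S, p.1.2 = 0 → ∀ m' : Fin 2 →₀ ℕ,
      coeff m' (gpoly p) = (if mexp p = m' then 1 else 0) := by
    intro p hb m'
    rw [hgp0 p hb, coeff_monomial]
  have hw1 : ∀ p : S, p.1.2 ≠ 0 → ∀ m' : Fin 2 →₀ ℕ,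
      coeff m' (gpoly p)
        = (if mexp p = m' then 1 else 0) + (if sexp p = m' then 1 else 0) := by
    intro p hb m'
    rw [hgp1 p hb, coeff_add, coeff_monomial, coeff_monomial]
  have hδ : ∀ p q : S,
      coeff (mexp q) ((gv p : homogeneousSubmodule (Fin 2) ℂ d) : MvPolynomial (Fin 2) ℂ)
        = if p = q then 1 else 0 := by
    intro p q
    show coeff (mexp q) (gpoly p) = _
    by_cases hb : p.1.2 = 0
    · rw [hw0 p hb]
      by_cases h : p = q
      · rw [if_pos (by rw [h]), if_pos h]
      · rw [if_neg (fun hc => h (hinj hc)), if_neg h]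
    · rw [hw1 p hb, if_neg (hms p q hb)]
      by_cases h : p = q
      · rw [if_pos (by rw [h]), if_pos h, add_zero]
      · rw [if_neg (fun hc => h (hinj hc)), if_neg h, add_zero]
  have hrec : ∀ f : vSub h1 d 1 1,
      ((f : homogeneousSubmodule (Fin 2) ℂ d) : MvPolynomial (Fin 2) ℂ)
      = ∑ p, coeff (mexp p) ((f : homogeneousSubmodule (Fin 2) ℂ d) : MvPolynomial (Fin 2) ℂ)
          • ((gv p : homogeneousSubmodule (Fin 2) ℂ d) : MvPolynomial (Fin 2) ℂ) := by
    intro f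
    set F : MvPolynomial (Fin 2) ℂ := ((f : homogeneousSubmodule (Fin 2) ℂ d) :
      MvPolynomial (Fin 2) ℂ) with hF
    have hhom : F.IsHomogeneous d := (f : homogeneousSubmodule (Fin 2) ℂ d).2
    have heig : polyAct n ζ (.r 1) F = F := by
      have := congrArg Subtype.val f.2.1
      rw [one_smul] at this
      exact this
    have hsym : ∀ m : Fin 2 →₀ ℕ, coeff (ex (m 1) (m 0)) F = coeff m F := by
      intro m
      have hval : polyAct n ζ (DihedralGroup.sr 0) F = F := by
        have := congrArg Subtype.val f.2.2
        rw [one_smul] at this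
        exact this
      have h2 := congrArg (coeff m) hval
      rwa [coeff_polyAct_s0] at h2
    ext m
    rw [coeff_sum]
    have hterm : ∀ p : S,
        coeff m (coeff (mexp p) F • ((gv p : homogeneousSubmodule (Fin 2) ℂ d) :
          MvPolynomial (Fin 2) ℂ))
        = coeff (mexp p) F * coeff m (gpoly p) := by
      intro p
      rw [coeff_smul, smul_eq_mul]
    rw [Finset.sum_congr rfl fun p _ => hterm p]
    have hdvd_of_m : ∀ q : S, mexp q = m → ((m 0 : ℤ) - (m 1 : ℤ)) = n * q.1.2 := by
      intro q hq
      have h0 : m 0 = q.1.1 + n * q.1.2 := by rw [← hq]; simp [hmexp]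
      have h1' : m 1 = q.1.1 := by rw [← hq]; simp [hmexp]
      rw [h0, h1']
      push_cast
      ring
    have hdvd_of_s : ∀ q : S, sexp q = m → ((m 0 : ℤ) - (m 1 : ℤ)) = -(n * q.1.2) := by
      intro q hq
      have h0 : m 0 = q.1.1 := by rw [← hq]; simp [hsexp]
      have h1' : m 1 = q.1.1 + n * q.1.2 := by rw [← hq]; simp [hsexp]
      rw [h0, h1']
      push_cast
      ring
    by_cases hdeg : Finsupp.degree m = d
    · have hdz : m 0 + m 1 = d := by rw [degree_fin2] at hdeg; exact hdeg
      by_cases hdvd : (n : ℤ) ∣ (m 0 : ℤ) - (m 1 : ℤ)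
      · rcases Nat.lt_trichotomy (m 0) (m 1) with hlt | heq | hgt
        · -- m 0 < m 1 : representative is (m 0, k) with n*k = m 1 - m 0, k ≥ 1
          have hdvd' : n ∣ m 1 - m 0 := by
            have hcast : ((m 1 - m 0 : ℕ) : ℤ) = (m 1 : ℤ) - m 0 := by omega
            have h2 : (n : ℤ) ∣ ((m 1 - m 0 : ℕ) : ℤ) := by
              rw [hcast, ← neg_sub (m 0 : ℤ) (m 1 : ℤ)]
              exact dvd_neg.mpr hdvd
            exact_mod_cast h2
          obtain ⟨k, hk⟩ := hdvd'
          have hk1 : 1 ≤ k := by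
            rcases Nat.eq_zero_or_pos k with h0 | h0
            · exfalso; rw [h0, Nat.mul_zero] at hk; omega
            · exact h0
          have hm1 : m 1 = m 0 + n * k := by
            generalize hT : n * k = T at hk
            omega
          have hcond : 2 * (m 0) + n * k = d := by
            generalize hT : n * k = T at hm1 ⊢
            omega
          set p₀ : S := ⟨(m 0, k), hcond⟩ with hp₀
          have hbk : p₀.1.2 ≠ 0 := by
            show k ≠ 0
            omega
          have hsx : sexp p₀ = m := by
            show ex (m 0) (m 0 + n * k) = m
            rw [← hm1]
            exact (eq_ex m).symm
          have hmexp₀ : mexp p₀ = ex (m 1) (m 0) := by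
            show ex (m 0 + n * k) (m 0) = ex (m 1) (m 0)
            rw [← hm1]
          have hmx : mexp p₀ ≠ m := by
            intro hc
            rw [hmexp₀] at hc
            have := (ex_inj (hc.trans (eq_ex m))).1
            omega
          rw [Finset.sum_eq_single p₀]
          · rw [hw1 p₀ hbk, if_neg hmx, if_pos hsx, hmexp₀, hsym m]
            ring
          · intro q _ hq
            have hq1 : mexp q ≠ m := by
              intro hc
              have h2 := hdvd_of_m q hc
              have hpos : (0 : ℤ) ≤ (n : ℤ) * (q.1.2 : ℤ) := by positivity
              have hlt' : (m 0 : ℤ) < (m 1 : ℤ) := by exact_mod_cast hlt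
              linarith
            by_cases hb : q.1.2 = 0
            · rw [hw0 q hb, if_neg hq1, mul_zero]
            · have hq2 : sexp q ≠ m := by
                intro hc
                apply hq
                have h0 : q.1.1 = m 0 := (ex_inj (hc.trans (eq_ex m))).1
                have h1' : q.1.1 + n * q.1.2 = m 1 := (ex_inj (hc.trans (eq_ex m))).2
                have hb2 : n * q.1.2 = n * k := by
                  generalize hT : n * q.1.2 = T at h1'
                  generalize hU : n * k = U at hm1
                  omega
                have hb' : q.1.2 = k :=
                  Nat.eq_of_mul_eq_mul_left (Nat.pos_of_ne_zero hn0) hb2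
                exact Subtype.ext (Prod.ext h0 hb')
              rw [hw1 q hb, if_neg hq1, if_neg hq2, add_zero, mul_zero]
          · intro h
            exact absurd (Finset.mem_univ p₀) h
        · -- m 0 = m 1 : representative is (m 0, 0)
          have hcond : 2 * (m 0) + n * 0 = d := by
            rw [Nat.mul_zero]
            omega
          set p₀ : S := ⟨(m 0, 0), hcond⟩ with hp₀
          have hb0 : p₀.1.2 = 0 := rfl
          have hmx : mexp p₀ = m := by
            show ex (m 0 + n * 0) (m 0) = m
            rw [Nat.mul_zero, Nat.add_zero]
            have hx : ex (m 0) (m 0) = ex (m 0) (m 1) := by rw [heq]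
            rw [hx]
            exact (eq_ex m).symm
          rw [Finset.sum_eq_single p₀]
          · rw [hw0 p₀ hb0, if_pos hmx, hmx, mul_one]
          · intro q _ hq
            by_cases hb : q.1.2 = 0
            · have hq1 : mexp q ≠ m := by
                intro hc
                apply hq
                have h0 : q.1.1 + n * q.1.2 = m 0 := (ex_inj (hc.trans (eq_ex m))).1
                have h1' : q.1.1 = m 1 := (ex_inj (hc.trans (eq_ex m))).2
                apply Subtype.ext
                apply Prod.ext
                · show q.1.1 = m 0
                  omega
                · exact hb
              rw [hw0 q hb, if_neg hq1, mul_zero]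
            · have hq1 : mexp q ≠ m := by
                intro hc
                have h2 := hdvd_of_m q hc
                have hpos : (0 : ℤ) < (n : ℤ) * (q.1.2 : ℤ) := by
                  apply mul_pos
                  · exact_mod_cast Nat.pos_of_ne_zero hn0
                  · exact_mod_cast Nat.pos_of_ne_zero hb
                have heq' : (m 0 : ℤ) = (m 1 : ℤ) := by exact_mod_cast heq
                linarith
              have hq2 : sexp q ≠ m := by
                intro hc
                have h2 := hdvd_of_s q hc
                have hpos : (0 : ℤ) < (n : ℤ) * (q.1.2 : ℤ) := by
                  apply mul_pos
                  · exact_mod_cast Nat.pos_of_ne_zero hn0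
                  · exact_mod_cast Nat.pos_of_ne_zero hb
                have heq' : (m 0 : ℤ) = (m 1 : ℤ) := by exact_mod_cast heq
                linarith
              rw [hw1 q hb, if_neg hq1, if_neg hq2, add_zero, mul_zero]
          · intro h
            exact absurd (Finset.mem_univ p₀) h
        · -- m 0 > m 1 : representative is (m 1, k) with n*k = m 0 - m 1, k ≥ 1
          have hdvd' : n ∣ m 0 - m 1 := by
            have hcast : ((m 0 - m 1 : ℕ) : ℤ) = (m 0 : ℤ) - m 1 := by omega
            have h2 : (n : ℤ) ∣ ((m 0 - m 1 : ℕ) : ℤ) := by rw [hcast]; exact hdvd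
            exact_mod_cast h2
          obtain ⟨k, hk⟩ := hdvd'
          have hk1 : 1 ≤ k := by
            rcases Nat.eq_zero_or_pos k with h0 | h0
            · exfalso; rw [h0, Nat.mul_zero] at hk; omega
            · exact h0
          have hm0 : m 0 = m 1 + n * k := by
            generalize hT : n * k = T at hk
            omega
          have hcond : 2 * (m 1) + n * k = d := by
            generalize hT : n * k = T at hm0 ⊢
            omega
          set p₀ : S := ⟨(m 1, k), hcond⟩ with hp₀
          have hbk : p₀.1.2 ≠ 0 := by
            show k ≠ 0
            omega
          have hmx : mexp p₀ = m := by
            show ex (m 1 + n * k) (m 1) = m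
            rw [← hm0]
            exact (eq_ex m).symm
          have hsx : sexp p₀ ≠ m := by
            intro hc
            have h0 : m 1 = m 0 := (ex_inj (hc.trans (eq_ex m))).1
            omega
          rw [Finset.sum_eq_single p₀]
          · rw [hw1 p₀ hbk, if_pos hmx, if_neg hsx, add_zero, hmx, mul_one]
          · intro q _ hq
            by_cases hb : q.1.2 = 0
            · have hq1 : mexp q ≠ m := by
                intro hc
                have h2 := hdvd_of_m q hc
                rw [hb] at h2
                have hgt' : (m 1 : ℤ) < (m 0 : ℤ) := by exact_mod_cast hgt
                push_cast at h2
                linarith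
              rw [hw0 q hb, if_neg hq1, mul_zero]
            · have hq1 : mexp q ≠ m := by
                intro hc
                apply hq
                have h1' : q.1.1 + n * q.1.2 = m 0 := (ex_inj (hc.trans (eq_ex m))).1
                have h0 : q.1.1 = m 1 := (ex_inj (hc.trans (eq_ex m))).2
                have hb2 : n * q.1.2 = n * k := by
                  rw [h0] at h1'
                  generalize hT : n * q.1.2 = T at h1'
                  generalize hU : n * k = U at hm0
                  omega
                have hb' : q.1.2 = k :=
                  Nat.eq_of_mul_eq_mul_left (Nat.pos_of_ne_zero hn0) hb2
                exact Subtype.ext (Prod.ext h0 hb')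
              have hq2 : sexp q ≠ m := by
                intro hc
                have h2 := hdvd_of_s q hc
                have hpos : (0 : ℤ) < (n : ℤ) * (q.1.2 : ℤ) := by
                  apply mul_pos
                  · exact_mod_cast Nat.pos_of_ne_zero hn0
                  · exact_mod_cast Nat.pos_of_ne_zero hb
                have hgt' : (m 1 : ℤ) < (m 0 : ℤ) := by exact_mod_cast hgt
                linarith
              rw [hw1 q hb, if_neg hq1, if_neg hq2, add_zero, mul_zero]
          · intro h
            exact absurd (Finset.mem_univ p₀) h
      · -- no divisibility : coefficient vanishes
        have hcm : coeff m F = 0 := by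
          by_contra hc
          have heq : ζ ^ ((m 0 : ℤ) - (m 1 : ℤ)) * coeff m F = coeff m F := by
            rw [← coeff_polyAct_r1 hn3 hζ0, heig]
          have hzz : ζ ^ ((m 0 : ℤ) - (m 1 : ℤ)) = ζ ^ (0 : ℤ) := by
            rw [zpow_zero]
            exact mul_right_cancel₀ hc (by rw [heq, one_mul])
          have := (zpow_eq_zpow_iff hζ).mp hzz
          rw [sub_zero] at this
          exact hdvd this
        rw [hcm, Finset.sum_eq_zero]
        intro q _
        have hq1 : mexp q ≠ m := fun hc => hdvd ⟨(q.1.2 : ℤ), hdvd_of_m q hc⟩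
        have hq2 : sexp q ≠ m := fun hc => hdvd ⟨-(q.1.2 : ℤ), by rw [hdvd_of_s q hc]; ring⟩
        by_cases hb : q.1.2 = 0
        · rw [hw0 q hb, if_neg hq1, mul_zero]
        · rw [hw1 q hb, if_neg hq1, if_neg hq2, add_zero, mul_zero]
    · rw [hhom.coeff_eq_zero hdeg, Finset.sum_eq_zero]
      intro q _
      have hq1 : mexp q ≠ m := fun hc => hdeg (by rw [← hc]; exact hdeg_m q)
      have hq2 : sexp q ≠ m := fun hc => hdeg (by rw [← hc]; exact hdeg_s q)
      by_cases hb : q.1.2 = 0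
      · rw [hw0 q hb, if_neg hq1, mul_zero]
      · rw [hw1 q hb, if_neg hq1, if_neg hq2, add_zero, mul_zero]
  have hfr := finrank_eq_card_of_recon (vSub h1 d 1 1) mexp gv hδ hrec
  rw [hfr, ← Nat.card_eq_fintype_card]

set_option synthInstance.maxHeartbeats 1000000 in
set_option maxHeartbeats 1000000 in
lemma triv_hom_finrank (hζ : IsPrimitiveRoot ζ n) (hn3 : 3 ≤ n) (d : ℕ) :
    Module.finrank ℂ (Rep.of (trivRep n) ⟶ Rep.of (homRep n ζ hζ.pow_eq_one d))
      = Nat.card {p : ℕ × ℕ // 2 * p.1 + n * p.2 = d} := by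
  have hr : trivRep n (.r 1) 1 = 1 := rfl
  have hs : trivRep n (.sr 0) 1 = 1 := rfl
  have e := oneDimHomEquiv hζ.pow_eq_one d (trivRep n) 1 1 hr hs
  have hfr : Module.finrank ℂ (Rep.of (trivRep n) ⟶ Rep.of (homRep n ζ hζ.pow_eq_one d))
      = Module.finrank ℂ (vSub hζ.pow_eq_one d 1 1) := e.finrank_eq
  rw [hfr, triv_case hζ hn3 d]

set_option synthInstance.maxHeartbeats 1000000 in
set_option maxHeartbeats 1000000 in
lemma sgn_hom_finrank (hζ : IsPrimitiveRoot ζ n) (hn3 : 3 ≤ n) (d : ℕ) :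
    Module.finrank ℂ (Rep.of (sgnRep n) ⟶ Rep.of (homRep n ζ hζ.pow_eq_one d))
      = Nat.card {p : ℕ × ℕ // 2 * p.1 + n * p.2 + n = d} := by
  have hr : sgnRep n (.r 1) 1 = 1 := by
    show (sgnPM (DihedralGroup.r 1) • LinearMap.id) (1 : ℂ) = 1
    simp [sgnPM]
  have hs : sgnRep n (.sr 0) 1 = -1 := by
    show (sgnPM (DihedralGroup.sr 0) • LinearMap.id) (1 : ℂ) = -1
    simp [sgnPM]
  have e := oneDimHomEquiv hζ.pow_eq_one d (sgnRep n) 1 (-1) hr hs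
  have hfr : Module.finrank ℂ (Rep.of (sgnRep n) ⟶ Rep.of (homRep n ζ hζ.pow_eq_one d))
      = Module.finrank ℂ (vSub hζ.pow_eq_one d 1 (-1)) := e.finrank_eq
  rw [hfr, sgn_case hζ hn3 d]

set_option synthInstance.maxHeartbeats 1000000 in
set_option maxHeartbeats 1000000 in
lemma chi_hom_finrank (hζ : IsPrimitiveRoot ζ n) (hn3 : 3 ≤ n) (d i : ℕ)
    (hi1 : 1 ≤ i) (hi2 : i ≤ (n - 1) / 2) :
    Module.finrank ℂ
        (Rep.of (chiRep n ζ hζ.pow_eq_one (i : ℤ)) ⟶ Rep.of (homRep n ζ hζ.pow_eq_one d))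
      = Nat.card {p : ℕ × ℕ // 2 * p.1 + n * p.2 + i = d}
        + Nat.card {p : ℕ × ℕ // 2 * p.1 + n * p.2 + (n - i) = d} := by
  have e := twoDimHomEquiv hζ.pow_eq_one hn3 d (i : ℤ)
  have hfr : Module.finrank ℂ
        (Rep.of (chiRep n ζ hζ.pow_eq_one (i : ℤ)) ⟶ Rep.of (homRep n ζ hζ.pow_eq_one d))
      = Module.finrank ℂ (rSub hζ.pow_eq_one d (ζ ^ (i : ℤ))) := e.finrank_eq
  rw [hfr, chi_case hζ hn3 d i hi1 hi2]

/-- Let `n ≥ 3` be odd, `ζ` a primitive `n`-th root of unity, `C = (n-1)/2`, and let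
`W = D_n` act on `S = ℂ[X,Y]` by `r·X = ζX`, `r·Y = ζ⁻¹Y`, `s·X = Y`, `s·Y = X`.
For every `d ≥ 0`, with multiplicities `[S_d : λ] = dim_ℂ Hom_W(λ, S_d)`:
`[S_d : triv] = #{(a,b) ∈ ℕ² | 2a + nb = d}`,
`[S_d : sgn] = #{(a,b) ∈ ℕ² | 2a + nb = d - n}`, and, for `1 ≤ i ≤ C`,
`[S_d : χ_i] = #{(a,b) ∈ ℕ² | 2a + nb = d - i} + #{(a,b) ∈ ℕ² | 2a + nb = d - (n-i)}`. -/
theorem stmt_8 (n : ℕ) [NeZero n] (hn : 3 ≤ n) (hodd : Odd n)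
    (ζ : ℂ) (hζ : IsPrimitiveRoot ζ n) (d : ℕ) :
    Module.finrank ℂ (Rep.of (trivRep n) ⟶ Rep.of (homRep n ζ hζ.pow_eq_one d)) =
      Nat.card {p : ℕ × ℕ // 2 * p.1 + n * p.2 = d} ∧
    Module.finrank ℂ (Rep.of (sgnRep n) ⟶ Rep.of (homRep n ζ hζ.pow_eq_one d)) =
      Nat.card {p : ℕ × ℕ // 2 * p.1 + n * p.2 + n = d} ∧
    (∀ i : ℕ, 1 ≤ i → i ≤ (n - 1) / 2 →
      Module.finrank ℂ
          (Rep.of (chiRep n ζ hζ.pow_eq_one (i : ℤ)) ⟶ Rep.of (homRep n ζ hζ.pow_eq_one d)) =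
        Nat.card {p : ℕ × ℕ // 2 * p.1 + n * p.2 + i = d} +
          Nat.card {p : ℕ × ℕ // 2 * p.1 + n * p.2 + (n - i) = d}) := by
  exact ⟨triv_hom_finrank hζ hn d, sgn_hom_finrank hζ hn d,
    fun i hi1 hi2 => chi_hom_finrank hζ hn d i hi1 hi2⟩

end DP
end
end

section
/- Let i, j be integers with 1 ≤ i < j. If a, b, c ∈ ℂ[X,Y] satisfy a·Y^i + b·X^{j−i} = 0 and −a·X^i + c·Y^{j−i} = 0, then there exists u ∈ ℂ[X,Y] with a = u·(XY)^{j−i}, b = −u·Y^j, and c = u·X^j. -/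
/-!
Put `p = X`, `q = Y`, `k = j - i`. The relations give `p^k ∣ a * q^i` and `q^k ∣ a * p^i`;
as `p` and `q` are non-associate primes, `p^k` and `q^k`, hence `(p * q)^k`, divide `a`. Writing
`a = u * (p * q)^k` and cancelling `p^k`, resp. `q^k`, in the two relations yields `b` and `c`.
-/

open MvPolynomial

section

variable {M : Type*} [CommMonoidWithZero M] [IsCancelMulZero M] {p q a : M}

theorem Prime.pow_dvd_of_dvd_mul_pow_of_not_dvd (hp : Prime p) (hpq : ¬p ∣ q) {k i : ℕ}
    (h : p ^ k ∣ a * q ^ i) : p ^ k ∣ a :=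
  hp.pow_dvd_of_dvd_mul_right k (fun hdvd ↦ hpq (hp.dvd_of_dvd_pow hdvd)) h

theorem Prime.mul_pow_dvd_of_pow_dvd_of_pow_dvd (hp : Prime p) (hpq : ¬p ∣ q) {k : ℕ}
    (hpa : p ^ k ∣ a) (hqa : q ^ k ∣ a) : (p * q) ^ k ∣ a := by
  obtain ⟨v, rfl⟩ := hqa
  obtain ⟨u, rfl⟩ : p ^ k ∣ v :=
    hp.pow_dvd_of_dvd_mul_pow_of_not_dvd hpq (by rwa [mul_comm] at hpa)
  exact ⟨u, by simp only [mul_pow]; ac_rfl⟩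

end

theorem Prime.exists_eq_of_syzygy {R : Type*} [CommRing R] [IsDomain R] {p q a b c : R}
    (hp : Prime p) (hq : Prime q) (hpq : ¬p ∣ q) (hqp : ¬q ∣ p) (i k : ℕ)
    (h1 : a * q ^ i + b * p ^ k = 0) (h2 : -a * p ^ i + c * q ^ k = 0) :
    ∃ u, a = u * (p * q) ^ k ∧ b = -u * q ^ (k + i) ∧ c = u * p ^ (k + i) := by
  have hpa : p ^ k ∣ a * q ^ i := ⟨-b, by linear_combination h1⟩
  have hqa : q ^ k ∣ a * p ^ i := ⟨c, by linear_combination -h2⟩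
  obtain ⟨u, ha⟩ := hp.mul_pow_dvd_of_pow_dvd_of_pow_dvd hpq
    (hp.pow_dvd_of_dvd_mul_pow_of_not_dvd hpq hpa) (hq.pow_dvd_of_dvd_mul_pow_of_not_dvd hqp hqa)
  rw [mul_comm] at ha
  refine ⟨u, ha, ?_, ?_⟩
  · apply mul_right_cancel₀ (pow_ne_zero k hp.ne_zero)
    linear_combination h1 - q ^ i * ha
  · apply mul_right_cancel₀ (pow_ne_zero k hq.ne_zero)
    linear_combination h2 + p ^ i * ha

theorem stmt_15_general (i j : ℕ) (hij : i < j) (a b c : MvPolynomial (Fin 2) ℂ)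
    (h1 : a * X 1 ^ i + b * X 0 ^ (j - i) = 0)
    (h2 : -a * X 0 ^ i + c * X 1 ^ (j - i) = 0) :
    ∃ u : MvPolynomial (Fin 2) ℂ,
      a = u * (X 0 * X 1) ^ (j - i) ∧ b = -u * X 1 ^ j ∧ c = u * X 0 ^ j := by
  have hj : j - i + i = j := Nat.sub_add_cancel hij.le
  simpa only [hj] using
    Prime.exists_eq_of_syzygy X_prime X_prime (by simp) (by simp) i (j - i) h1 h2

/-- Let `i, j` be integers with `1 ≤ i < j`.  If `a, b, c ∈ ℂ[X,Y]` satisfy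
`a·Yⁱ + b·X^{j-i} = 0` and `-a·Xⁱ + c·Y^{j-i} = 0`, then there exists `u ∈ ℂ[X,Y]`
with `a = u·(XY)^{j-i}`, `b = -u·Yʲ` and `c = u·Xʲ`. -/
theorem stmt_15 (i j : ℕ) (hi : 1 ≤ i) (hij : i < j) (a b c : MvPolynomial (Fin 2) ℂ)
    (h1 : a * X 1 ^ i + b * X 0 ^ (j - i) = 0)
    (h2 : -a * X 0 ^ i + c * X 1 ^ (j - i) = 0) :
    ∃ u : MvPolynomial (Fin 2) ℂ,
      a = u * (X 0 * X 1) ^ (j - i) ∧ b = -u * X 1 ^ j ∧ c = u * X 0 ^ j :=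
  stmt_15_general i j hij a b c h1 h2
end

section
/- Let n ≥ 3 be an odd integer and 1 ≤ i ≤ (n−1)/2. The kernel of the ℂ[X,Y]-linear map ℂ[X,Y]^5 → ℂ[X,Y]^2 sending (f₁, f₂, f₃, f₄, f₅) to (f₁·Y^i + f₂·XY + f₅·X^{n−2i}, −f₁·X^i + f₃·XY + f₄·Y^{n−2i}) is the ℂ[X,Y]-submodule generated by the three elements (XY, −Y^i, X^i, 0, 0), (0, 0, −Y^{n−2i−1}, X, 0), and (0, −X^{n−2i−1}, 0, 0, Y). -/
/-!
If `x`, `y` are non-associate primes of a domain, a syzygy `f` of the two relations forces, by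
prime divisibility, `y ∣ f₅`, `x ∣ f₄` and `xy ∣ f₁`; after cancelling `xy` the relations
express `f₂` and `f₃` through these quotients, which exhibits `f` as a combination of the three
generators. For `ℂ[X,Y]` take `x = X`, `y = Y`.
-/

open MvPolynomial

theorem Prime.dvd_of_dvd_pow_mul {M : Type*} [CommMonoidWithZero M] {p q r : M} (hp : Prime p)
    (hpq : ¬ p ∣ q) {k : ℕ} (h : p ∣ q ^ k * r) : p ∣ r :=
  (hp.dvd_or_dvd h).resolve_left fun h' => hpq (hp.dvd_of_dvd_pow h')

namespace TwoPrimeSyzygy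

variable {A : Type*} [CommRing A]

theorem mem_ker_iff {x y : A} {a b : ℕ} {f : Fin 5 → A} :
    f ∈ LinearMap.ker (Matrix.mulVecLin
        !![y ^ a, x * y, 0, 0, x ^ b; -(x ^ a), 0, x * y, y ^ b, 0]) ↔
      y ^ a * f 0 + x * y * f 1 + x ^ b * f 4 = 0 ∧
        -(x ^ a * f 0) + x * y * f 2 + y ^ b * f 3 = 0 := by
  simp [funext_iff, Fin.forall_fin_two, dotProduct, Fin.sum_univ_five]

theorem span_le_ker (x y : A) (a b : ℕ) :
    Submodule.span A
        {![x * y, -(y ^ (a + 1)), x ^ (a + 1), 0, 0], ![0, 0, -(y ^ b), x, 0],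
          ![0, -(x ^ b), 0, 0, y]} ≤
      LinearMap.ker (Matrix.mulVecLin
        !![y ^ (a + 1), x * y, 0, 0, x ^ (b + 1); -(x ^ (a + 1)), 0, x * y, y ^ (b + 1), 0]) := by
  rw [Submodule.span_le]
  rintro v (rfl | rfl | rfl) <;>
    exact mem_ker_iff.2 ⟨by simp <;> ring, by simp <;> ring⟩

variable [IsDomain A]

theorem ker_le_span {x y : A} (hx : Prime x) (hy : Prime y) (hxy : ¬ x ∣ y) (hyx : ¬ y ∣ x)
    (a b : ℕ) :
    LinearMap.ker (Matrix.mulVecLin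
        !![y ^ (a + 1), x * y, 0, 0, x ^ (b + 1); -(x ^ (a + 1)), 0, x * y, y ^ (b + 1), 0]) ≤
      Submodule.span A
        {![x * y, -(y ^ (a + 1)), x ^ (a + 1), 0, 0], ![0, 0, -(y ^ b), x, 0],
          ![0, -(x ^ b), 0, 0, y]} := by
  intro f hf
  obtain ⟨E1, E2⟩ := mem_ker_iff.1 hf
  obtain ⟨c, hc⟩ : y ∣ f 4 :=
    hy.dvd_of_dvd_pow_mul hyx (k := b + 1) ⟨-(y ^ a * f 0 + x * f 1), by linear_combination E1⟩
  obtain ⟨d, hd⟩ : x ∣ f 3 :=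
    hx.dvd_of_dvd_pow_mul hxy (k := b + 1) ⟨x ^ a * f 0 - y * f 2, by linear_combination E2⟩
  obtain ⟨u, hu⟩ : x ∣ f 0 :=
    hx.dvd_of_dvd_pow_mul hxy (k := a + 1) ⟨-(y * f 1 + x ^ b * y * c), by
      linear_combination E1 - x ^ (b + 1) * hc⟩
  obtain ⟨e, he⟩ : y ∣ u := by
    refine hy.dvd_of_dvd_pow_mul hyx (k := a + 2) ⟨x * f 2 + y ^ b * x * d, ?_⟩
    linear_combination -E2 + y ^ (b + 1) * hd - x ^ (a + 1) * hu
  have hxy0 : x * y ≠ 0 := mul_ne_zero hx.ne_zero hy.ne_zero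
  have hf1 : f 1 = -(e * y ^ (a + 1)) - c * x ^ b := mul_left_cancel₀ hxy0 <| by
    linear_combination E1 - x ^ (b + 1) * hc - y ^ (a + 1) * hu - x * y ^ (a + 1) * he
  have hf2 : f 2 = e * x ^ (a + 1) - d * y ^ b := mul_left_cancel₀ hxy0 <| by
    linear_combination E2 - y ^ (b + 1) * hd + x ^ (a + 1) * hu + x ^ (a + 2) * he
  have hf : f = e • ![x * y, -(y ^ (a + 1)), x ^ (a + 1), 0, 0] + d • ![0, 0, -(y ^ b), x, 0]
      + c • ![0, -(x ^ b), 0, 0, y] := by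
    ext j
    fin_cases j <;> simp [hu, he, hf1, hf2, hd, hc] <;> ring
  rw [hf]
  refine Submodule.add_mem _ (Submodule.add_mem _ ?_ ?_) ?_ <;>
    exact Submodule.smul_mem _ _ (Submodule.subset_span (by simp))

theorem ker_eq_span {x y : A} (hx : Prime x) (hy : Prime y) (hxy : ¬ x ∣ y) (hyx : ¬ y ∣ x)
    (a b : ℕ) :
    LinearMap.ker (Matrix.mulVecLin
        !![y ^ (a + 1), x * y, 0, 0, x ^ (b + 1); -(x ^ (a + 1)), 0, x * y, y ^ (b + 1), 0]) =
      Submodule.span A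
        {![x * y, -(y ^ (a + 1)), x ^ (a + 1), 0, 0], ![0, 0, -(y ^ b), x, 0],
          ![0, -(x ^ b), 0, 0, y]} :=
  (ker_le_span hx hy hxy hyx a b).antisymm (span_le_ker x y a b)

end TwoPrimeSyzygy

theorem stmt_16_general (n i : ℕ) (hi : 1 ≤ i) (hiC : i ≤ (n - 1) / 2) :
    LinearMap.ker (Matrix.mulVecLin
        (!![X 1 ^ i, X 0 * X 1, 0, 0, X 0 ^ (n - 2 * i);
            -(X 0 ^ i), 0, X 0 * X 1, X 1 ^ (n - 2 * i), 0] :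
          Matrix (Fin 2) (Fin 5) (MvPolynomial (Fin 2) ℂ))) =
      Submodule.span (MvPolynomial (Fin 2) ℂ)
        {![X 0 * X 1, -(X 1 ^ i), X 0 ^ i, 0, 0],
         ![0, 0, -(X 1 ^ (n - 2 * i - 1)), X 0, 0],
         ![0, -(X 0 ^ (n - 2 * i - 1)), 0, 0, X 1]} := by
  obtain ⟨a, rfl⟩ : ∃ a, i = a + 1 := ⟨i - 1, by omega⟩
  obtain ⟨b, hb⟩ : ∃ b, n - 2 * (a + 1) = b + 1 := ⟨n - 2 * (a + 1) - 1, by omega⟩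
  rw [hb, Nat.add_sub_cancel]
  exact TwoPrimeSyzygy.ker_eq_span X_prime X_prime (by simp) (by simp) a b

/-- Let `n ≥ 3` be odd and `1 ≤ i ≤ (n-1)/2`.  The kernel of the `ℂ[X,Y]`-linear map
`ℂ[X,Y]⁵ → ℂ[X,Y]²`,
`(f₁, f₂, f₃, f₄, f₅) ↦ (f₁·Yⁱ + f₂·XY + f₅·X^{n-2i}, -f₁·Xⁱ + f₃·XY + f₄·Y^{n-2i})`,
is the `ℂ[X,Y]`-submodule generated by `(XY, -Yⁱ, Xⁱ, 0, 0)`, `(0, 0, -Y^{n-2i-1}, X, 0)`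
and `(0, -X^{n-2i-1}, 0, 0, Y)`. -/
theorem stmt_16 (n i : ℕ) (hn : 3 ≤ n) (hodd : Odd n) (hi : 1 ≤ i) (hiC : i ≤ (n - 1) / 2) :
    LinearMap.ker (Matrix.mulVecLin
        (!![X 1 ^ i, X 0 * X 1, 0, 0, X 0 ^ (n - 2 * i);
            -(X 0 ^ i), 0, X 0 * X 1, X 1 ^ (n - 2 * i), 0] :
          Matrix (Fin 2) (Fin 5) (MvPolynomial (Fin 2) ℂ))) =
      Submodule.span (MvPolynomial (Fin 2) ℂ)
        {![X 0 * X 1, -(X 1 ^ i), X 0 ^ i, 0, 0],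
         ![0, 0, -(X 1 ^ (n - 2 * i - 1)), X 0, 0],
         ![0, -(X 0 ^ (n - 2 * i - 1)), 0, 0, X 1]} :=
  stmt_16_general n i hi hiC
end

section
/- The quotient ring ℂ[X,Y]/(XY, X^n + Y^n) has ℂ-dimension 2n, and as a representation of W it is isomorphic to the regular representation ℂW. -/
noncomputable section

open MvPolynomial CategoryTheory

namespace DP

/-- The ideal `(XY, Xⁿ + Yⁿ)` of `ℂ[X,Y]`. -/
def dihedralIdeal (n : ℕ) : Ideal (MvPolynomial (Fin 2) ℂ) :=
  Ideal.span {X 0 * X 1, X 0 ^ n + X 1 ^ n}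

lemma polyAct_mem_dihedralIdeal (n : ℕ) [NeZero n] {ζ : ℂ} (h1 : ζ ^ n = 1)
    (g : DihedralGroup n) {f : MvPolynomial (Fin 2) ℂ} (hf : f ∈ dihedralIdeal n) :
    polyAct n ζ g f ∈ dihedralIdeal n := by
  have hζ0 : ζ ≠ 0 := ne_zero_of_pow_eq_one (NeZero.ne n) h1
  have hz1 : ∀ a : ℤ, ζ ^ a * ζ ^ (-a) = 1 := fun a => by
    rw [← zpow_add₀ hζ0, add_neg_cancel, zpow_zero]
  have hzn : ∀ a : ℤ, (ζ ^ a) ^ n = 1 := fun a => by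
    rw [← zpow_natCast (ζ ^ a) n, ← zpow_mul, mul_comm, zpow_mul, zpow_natCast, h1, one_zpow]
  have hXY : (X 0 * X 1 : MvPolynomial (Fin 2) ℂ) ∈ dihedralIdeal n :=
    Ideal.subset_span (Set.mem_insert _ _)
  have hXn : ((X 0 : MvPolynomial (Fin 2) ℂ) ^ n + X 1 ^ n) ∈ dihedralIdeal n :=
    Ideal.subset_span (Set.mem_insert_of_mem _ rfl)
  have hgen1 : polyAct n ζ g (X 0 * X 1) ∈ dihedralIdeal n := by
    rcases g with k | k <;>
      · simp only [polyAct, map_mul, aeval_X, Fin.isValue, Matrix.cons_val_zero,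
          Matrix.cons_val_one, Matrix.head_cons, smul_mul_smul_comm, hz1, one_smul]
        first
          | exact hXY
          | (rw [mul_comm]; exact hXY)
  have hgen2 : polyAct n ζ g (X 0 ^ n + X 1 ^ n) ∈ dihedralIdeal n := by
    rcases g with k | k <;>
      · simp only [polyAct, map_add, map_pow, aeval_X, Fin.isValue, Matrix.cons_val_zero,
          Matrix.cons_val_one, Matrix.head_cons, smul_pow, hzn, one_smul]
        first
          | exact hXn
          | (rw [add_comm]; exact hXn)
  refine Submodule.span_induction (p := fun x _ => polyAct n ζ g x ∈ dihedralIdeal n)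
    (fun x hx => ?_) (by simp)
    (fun x y _ _ hx hy => by
      show polyAct n ζ g (x + y) ∈ dihedralIdeal n
      rw [map_add]
      exact add_mem hx hy)
    (fun a x _ hx => ?_) hf
  · rcases hx with rfl | hx
    · exact hgen1
    · rcases hx with rfl
      exact hgen2
  · show polyAct n ζ g (a • x) ∈ dihedralIdeal n
    rw [smul_eq_mul, map_mul]
    exact Ideal.mul_mem_left _ _ hx

/-- The action of a dihedral group element on the quotient ring `ℂ[X,Y]/(XY, Xⁿ+Yⁿ)`. -/
def quotAct (n : ℕ) [NeZero n] {ζ : ℂ} (h1 : ζ ^ n = 1) (g : DihedralGroup n) :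
    (MvPolynomial (Fin 2) ℂ ⧸ dihedralIdeal n) →ₗ[ℂ] (MvPolynomial (Fin 2) ℂ ⧸ dihedralIdeal n) :=
  (Ideal.Quotient.liftₐ (dihedralIdeal n)
    ((Ideal.Quotient.mkₐ ℂ (dihedralIdeal n)).comp (polyAct n ζ g))
    (fun a ha => by
      rw [AlgHom.comp_apply]
      exact Ideal.Quotient.eq_zero_iff_mem.mpr (polyAct_mem_dihedralIdeal n h1 g ha))).toLinearMap

lemma quotAct_mk (n : ℕ) [NeZero n] {ζ : ℂ} (h1 : ζ ^ n = 1) (g : DihedralGroup n)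
    (f : MvPolynomial (Fin 2) ℂ) :
    quotAct n h1 g (Ideal.Quotient.mk (dihedralIdeal n) f) =
      Ideal.Quotient.mk (dihedralIdeal n) (polyAct n ζ g f) := by
  simp [quotAct, Ideal.Quotient.liftₐ_apply, Ideal.Quotient.lift_mk]
  rfl

/-- The representation of `D_n` on the quotient ring `ℂ[X,Y]/(XY, Xⁿ+Yⁿ)`. -/
def quotRep (n : ℕ) [NeZero n] (ζ : ℂ) (h1 : ζ ^ n = 1) :
    Representation ℂ (DihedralGroup n) (MvPolynomial (Fin 2) ℂ ⧸ dihedralIdeal n) where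
  toFun g := quotAct n h1 g
  map_one' := by
    refine LinearMap.ext fun x => ?_
    obtain ⟨f, rfl⟩ := Ideal.Quotient.mk_surjective x
    rw [quotAct_mk n h1, polyAct_one]
    rfl
  map_mul' g h := by
    refine LinearMap.ext fun x => ?_
    obtain ⟨f, rfl⟩ := Ideal.Quotient.mk_surjective x
    rw [Module.End.mul_apply, quotAct_mk n h1, quotAct_mk n h1, quotAct_mk n h1,
      polyAct_mul n h1, AlgHom.comp_apply]

section Aux

open Finsupp in
lemma coeff_eq_zero_of_mem (n : ℕ) (hn3 : 3 ≤ n) {f : MvPolynomial (Fin 2) ℂ}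
    (hf : f ∈ dihedralIdeal n) :
    (∀ i < n, MvPolynomial.coeff (Finsupp.single 0 i) f = 0) ∧
    (∀ j < n, MvPolynomial.coeff (Finsupp.single 1 j) f = 0) ∧
    MvPolynomial.coeff (Finsupp.single 0 n) f = MvPolynomial.coeff (Finsupp.single 1 n) f := by
  rw [dihedralIdeal, Ideal.mem_span_pair] at hf
  obtain ⟨p, q, hpq⟩ := hf
  have hXY : (X 0 * X 1 : MvPolynomial (Fin 2) ℂ)
      = monomial (Finsupp.single 0 1 + Finsupp.single 1 1) 1 := by
    rw [← pow_one (X (0 : Fin 2) : MvPolynomial (Fin 2) ℂ),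
      ← pow_one (X (1 : Fin 2) : MvPolynomial (Fin 2) ℂ),
      X_pow_eq_monomial, X_pow_eq_monomial, monomial_mul, one_mul]
  have key : ∀ m : Fin 2 →₀ ℕ, MvPolynomial.coeff m f =
      (if Finsupp.single 0 1 + Finsupp.single 1 1 ≤ m
        then MvPolynomial.coeff (m - (Finsupp.single 0 1 + Finsupp.single 1 1)) p * 1 else 0)
      + ((if Finsupp.single (0 : Fin 2) n ≤ m
          then MvPolynomial.coeff (m - Finsupp.single 0 n) q * 1 else 0)
        + (if Finsupp.single (1 : Fin 2) n ≤ m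
          then MvPolynomial.coeff (m - Finsupp.single 1 n) q * 1 else 0)) := by
    intro m
    rw [← hpq, coeff_add, mul_add, coeff_add, hXY, X_pow_eq_monomial, X_pow_eq_monomial,
      coeff_mul_monomial', coeff_mul_monomial', coeff_mul_monomial']
  refine ⟨fun i hi => ?_, fun j hj => ?_, ?_⟩
  · have hA : ¬(Finsupp.single (0 : Fin 2) 1 + Finsupp.single 1 1 ≤ Finsupp.single 0 i) := by
      intro h; have := Finsupp.le_def.mp h 1; simp at this
    have hB : ¬(Finsupp.single (0 : Fin 2) n ≤ Finsupp.single (0 : Fin 2) i) := by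
      intro h; have := Finsupp.le_def.mp h 0; simp at this; omega
    have hC : ¬(Finsupp.single (1 : Fin 2) n ≤ Finsupp.single (0 : Fin 2) i) := by
      intro h; have := Finsupp.le_def.mp h 1; simp at this; omega
    rw [key, if_neg hA, if_neg hB, if_neg hC]; ring
  · have hA : ¬(Finsupp.single (0 : Fin 2) 1 + Finsupp.single 1 1 ≤ Finsupp.single 1 j) := by
      intro h; have := Finsupp.le_def.mp h 0; simp at this
    have hB : ¬(Finsupp.single (0 : Fin 2) n ≤ Finsupp.single (1 : Fin 2) j) := by
      intro h; have := Finsupp.le_def.mp h 0; simp at this; omega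
    have hC : ¬(Finsupp.single (1 : Fin 2) n ≤ Finsupp.single (1 : Fin 2) j) := by
      intro h; have := Finsupp.le_def.mp h 1; simp at this; omega
    rw [key, if_neg hA, if_neg hB, if_neg hC]; ring
  · have hA : ¬(Finsupp.single (0 : Fin 2) 1 + Finsupp.single 1 1 ≤ Finsupp.single 0 n) := by
      intro h; have := Finsupp.le_def.mp h 1; simp at this
    have hA' : ¬(Finsupp.single (0 : Fin 2) 1 + Finsupp.single 1 1 ≤ Finsupp.single 1 n) := by
      intro h; have := Finsupp.le_def.mp h 0; simp at this
    have hB : ¬(Finsupp.single (1 : Fin 2) n ≤ Finsupp.single (0 : Fin 2) n) := by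
      intro h; have := Finsupp.le_def.mp h 1; simp at this; omega
    have hC : ¬(Finsupp.single (0 : Fin 2) n ≤ Finsupp.single (1 : Fin 2) n) := by
      intro h; have := Finsupp.le_def.mp h 0; simp at this; omega
    rw [key, key, if_neg hA, if_neg hA', if_neg hB, if_neg hC, if_pos le_rfl, if_pos le_rfl]
    simp

end Aux

lemma dft_zero (n : ℕ) [NeZero n] {ζ : ℂ} (hζ : IsPrimitiveRoot ζ n) (c : ZMod n → ℂ)
    (h : ∀ i < n, ∑ k : ZMod n, c k * ζ ^ (k.val * i) = 0) : ∀ l, c l = 0 := by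
  intro l
  have hn : 0 < n := Nat.pos_of_ne_zero (NeZero.ne n)
  have hlv : l.val < n := ZMod.val_lt l
  have key : ∑ i ∈ Finset.range n, ζ ^ ((n - l.val) * i) * ∑ k : ZMod n, c k * ζ ^ (k.val * i)
      = 0 := by
    apply Finset.sum_eq_zero
    intro i hi
    rw [h i (Finset.mem_range.mp hi), mul_zero]
  have swap : ∑ i ∈ Finset.range n, ζ ^ ((n - l.val) * i) * ∑ k : ZMod n, c k * ζ ^ (k.val * i)
      = ∑ k : ZMod n, c k * ∑ i ∈ Finset.range n, (ζ ^ (n - l.val + k.val)) ^ i := by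
    simp_rw [Finset.mul_sum]
    rw [Finset.sum_comm]
    congr 1
    ext k
    congr 1
    ext i
    rw [← pow_mul, add_mul, pow_add]
    ring
  have geom : ∀ k : ZMod n, (∑ i ∈ Finset.range n, (ζ ^ (n - l.val + k.val)) ^ i)
      = if k = l then (n : ℂ) else 0 := by
    intro k
    by_cases hk : k = l
    · subst hk
      have : n - k.val + k.val = n := by omega
      rw [this, hζ.pow_eq_one, if_pos rfl]
      simp
    · rw [if_neg hk]
      set w : ℂ := ζ ^ (n - l.val + k.val) with hw
      have hw1 : w ≠ 1 := by
        intro hone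
        obtain ⟨t, ht⟩ := (hζ.pow_eq_one_iff_dvd _).mp hone
        have hkv : k.val < n := ZMod.val_lt k
        have : k.val = l.val := by
          rcases Nat.lt_or_ge t 2 with h2 | h2
          · interval_cases t <;> omega
          · have h3 : n * 2 ≤ n * t := Nat.mul_le_mul_left n h2
            omega
        exact hk (ZMod.val_injective _ this)
      have hwn : w ^ n = 1 := by
        rw [hw, ← pow_mul, mul_comm, pow_mul, hζ.pow_eq_one, one_pow]
      have := geom_sum_mul w n
      rw [hwn, sub_self] at this
      rcases mul_eq_zero.mp this with h0 | h0
      · exact h0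
      · exact absurd (sub_eq_zero.mp h0) hw1
  rw [swap] at key
  simp_rw [geom, mul_ite, mul_zero] at key
  rw [Finset.sum_ite_eq' Finset.univ l (fun k => c k * (n : ℂ)), if_pos (Finset.mem_univ l)]
    at key
  have hn0 : (n : ℂ) ≠ 0 := Nat.cast_ne_zero.mpr (NeZero.ne n)
  exact (mul_eq_zero.mp key).resolve_right hn0

/-- The cyclic vector `1 + X + ⋯ + Xⁿ` in `ℂ[X,Y]`. -/
def genPoly (n : ℕ) : MvPolynomial (Fin 2) ℂ := ∑ i ∈ Finset.range (n + 1), X 0 ^ i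

/-- The image of the cyclic vector in the quotient. -/
def genQ (n : ℕ) : MvPolynomial (Fin 2) ℂ ⧸ dihedralIdeal n :=
  Ideal.Quotient.mk (dihedralIdeal n) (genPoly n)

/-- The equivariant map `ℂ[W] → ℂ[X,Y]/(XY, Xⁿ+Yⁿ)` sending `g ↦ g · v`. -/
def Phi (n : ℕ) [NeZero n] (ζ : ℂ) (h1 : ζ ^ n = 1) :
    (DihedralGroup n →₀ ℂ) →ₗ[ℂ] (MvPolynomial (Fin 2) ℂ ⧸ dihedralIdeal n) :=
  Finsupp.linearCombination ℂ (fun g => quotRep n ζ h1 g (genQ n))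

lemma Phi_single (n : ℕ) [NeZero n] (ζ : ℂ) (h1 : ζ ^ n = 1) (g : DihedralGroup n) (a : ℂ) :
    Phi n ζ h1 (Finsupp.single g a) = a • quotRep n ζ h1 g (genQ n) := by
  simp [Phi, Finsupp.linearCombination_single]

lemma Phi_equivariant (n : ℕ) [NeZero n] (ζ : ℂ) (h1 : ζ ^ n = 1) (g : DihedralGroup n)
    (c : DihedralGroup n →₀ ℂ) :
    Phi n ζ h1 (Finsupp.lmapDomain ℂ ℂ (g • ·) c)
      = quotRep n ζ h1 g (Phi n ζ h1 c) := by
  have := LinearMap.congr_fun (f := ((Phi n ζ h1).comp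
      (Finsupp.lmapDomain ℂ ℂ (g • ·))))
    (g := ((quotRep n ζ h1 g).comp (Phi n ζ h1))) ?_ c
  · exact this
  · apply Finsupp.lhom_ext
    intro h a
    simp only [LinearMap.comp_apply]
    rw [Finsupp.lmapDomain_apply, Finsupp.mapDomain_single, Phi_single, Phi_single, LinearMap.map_smul]
    congr 1
    rw [smul_eq_mul, map_mul]
    rfl

lemma polyAct_r_genPoly (n : ℕ) (ζ : ℂ) (k : ZMod n) :
    polyAct n ζ (DihedralGroup.r k) (genPoly n)
      = ∑ i ∈ Finset.range (n + 1), (ζ ^ (k.val * i)) • X 0 ^ i := by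
  rw [genPoly, map_sum]
  refine Finset.sum_congr rfl fun i _ => ?_
  rw [polyAct, map_pow, aeval_X]
  simp only [Matrix.cons_val_zero]
  rw [smul_pow]
  congr 1
  rw [← zpow_natCast (ζ ^ ((k.val : ℤ))) i, ← zpow_mul, ← zpow_natCast ζ (k.val * i)]
  congr 1

lemma polyAct_sr_genPoly (n : ℕ) (ζ : ℂ) (k : ZMod n) :
    polyAct n ζ (DihedralGroup.sr k) (genPoly n)
      = ∑ i ∈ Finset.range (n + 1), (ζ ^ (k.val * i)) • X 1 ^ i := by
  rw [genPoly, map_sum]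
  refine Finset.sum_congr rfl fun i _ => ?_
  rw [polyAct, map_pow, aeval_X]
  simp only [Matrix.cons_val_zero]
  rw [smul_pow]
  congr 1
  rw [← zpow_natCast (ζ ^ ((k.val : ℤ))) i, ← zpow_mul, ← zpow_natCast ζ (k.val * i)]
  congr 1

lemma coeff_X_pow_single (a b : Fin 2) (j i : ℕ) :
    MvPolynomial.coeff (Finsupp.single a j) ((X b : MvPolynomial (Fin 2) ℂ) ^ i)
      = if Finsupp.single b i = Finsupp.single a j then 1 else 0 := by
  rw [X_pow_eq_monomial, coeff_monomial]

/-- `ZMod n ⊕ ZMod n ≃ D_n`. -/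
def dihedralSum (n : ℕ) : ZMod n ⊕ ZMod n ≃ DihedralGroup n where
  toFun := Sum.elim DihedralGroup.r DihedralGroup.sr
  invFun g := match g with
    | DihedralGroup.r k => Sum.inl k
    | DihedralGroup.sr k => Sum.inr k
  left_inv := by rintro (k | k) <;> rfl
  right_inv := by rintro (k | k) <;> rfl

lemma sum_dihedral {M : Type*} [AddCommMonoid M] (n : ℕ) [NeZero n] (f : DihedralGroup n → M) :
    ∑ g : DihedralGroup n, f g
      = ∑ k : ZMod n, f (DihedralGroup.r k) + ∑ k : ZMod n, f (DihedralGroup.sr k) := by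
  rw [← Equiv.sum_comp (dihedralSum n) f, Fintype.sum_sum_type]
  rfl

lemma mk_smul (n : ℕ) (a : ℂ) (x : MvPolynomial (Fin 2) ℂ) :
    Ideal.Quotient.mk (dihedralIdeal n) (a • x)
      = a • Ideal.Quotient.mk (dihedralIdeal n) x := by
  rw [← Ideal.Quotient.mkₐ_eq_mk (R₁ := ℂ), map_smul]

lemma single_eq_single_same (a : Fin 2) (i j : ℕ) :
    (Finsupp.single a i = Finsupp.single a j) ↔ i = j := by
  rw [Finsupp.single_eq_single_iff]
  constructor
  · rintro (⟨-, h⟩ | ⟨h1, h2⟩) <;> omega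
  · intro h; exact Or.inl ⟨rfl, h⟩

lemma single_eq_single_ne {a b : Fin 2} (hab : a ≠ b) (i j : ℕ) :
    (Finsupp.single a i = Finsupp.single b j) ↔ i = 0 ∧ j = 0 := by
  rw [Finsupp.single_eq_single_iff]
  constructor
  · rintro (⟨h, -⟩ | h)
    · exact absurd h hab
    · exact h
  · intro h; exact Or.inr h

lemma sum_pow_ite (N : ℕ) (z : ℂ) (j : ℕ) (hj : j < N) :
    ∑ i ∈ Finset.range N, z ^ i * (if i = j then (1 : ℂ) else 0) = z ^ j := by
  simp_rw [mul_ite, mul_one, mul_zero]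
  rw [Finset.sum_ite_eq' (Finset.range N) j (fun i => z ^ i), if_pos (Finset.mem_range.mpr hj)]

lemma Phi_injective (n : ℕ) [NeZero n] (hn3 : 3 ≤ n) {ζ : ℂ} (hζ : IsPrimitiveRoot ζ n) :
    Function.Injective (Phi n ζ hζ.pow_eq_one) := by
  have h1 : ζ ^ n = 1 := hζ.pow_eq_one
  rw [← LinearMap.ker_eq_bot, LinearMap.ker_eq_bot']
  intro c hc
  set α : ZMod n → ℂ := fun k => c (DihedralGroup.r k) with hα
  set β : ZMod n → ℂ := fun k => c (DihedralGroup.sr k) with hβ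
  set F : MvPolynomial (Fin 2) ℂ :=
      (∑ k : ZMod n, α k • ∑ i ∈ Finset.range (n + 1), ζ ^ (k.val * i) • X 0 ^ i)
      + (∑ k : ZMod n, β k • ∑ i ∈ Finset.range (n + 1), ζ ^ (k.val * i) • X 1 ^ i) with hFdef
  have hrep : ∀ g : DihedralGroup n, ∀ p : MvPolynomial (Fin 2) ℂ,
      (quotRep n ζ h1) g (Ideal.Quotient.mk (dihedralIdeal n) p)
        = Ideal.Quotient.mk (dihedralIdeal n) (polyAct n ζ g p) :=
    fun g p => quotAct_mk n h1 g p
  have hPhiF : Phi n ζ h1 c = Ideal.Quotient.mk (dihedralIdeal n) F := by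
    have hsum : Phi n ζ h1 c = ∑ g : DihedralGroup n, c g • (quotRep n ζ h1) g (genQ n) := by
      rw [Phi, Finsupp.linearCombination_apply]
      exact Finsupp.sum_fintype _ _ (fun g => zero_smul ℂ _)
    rw [hsum, sum_dihedral, hFdef, map_add, map_sum, map_sum]
    congr 1 <;> refine Finset.sum_congr rfl fun k _ => ?_
    · rw [show genQ n = Ideal.Quotient.mk (dihedralIdeal n) (genPoly n) from rfl, hrep,
        polyAct_r_genPoly, mk_smul]
    · rw [show genQ n = Ideal.Quotient.mk (dihedralIdeal n) (genPoly n) from rfl, hrep,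
        polyAct_sr_genPoly, mk_smul]
  have hFI : F ∈ dihedralIdeal n := Ideal.Quotient.eq_zero_iff_mem.mp (hPhiF ▸ hc)
  obtain ⟨hI0, hI1, hItop⟩ := coeff_eq_zero_of_mem n hn3 hFI
  -- coefficient computations
  have hcoeff0 : ∀ j ≤ n, MvPolynomial.coeff (Finsupp.single (0 : Fin 2) j) F
      = (∑ k : ZMod n, α k * ζ ^ (k.val * j))
        + (if j = 0 then ∑ k : ZMod n, β k else 0) := by
    intro j hj
    rw [hFdef, coeff_add, coeff_sum, coeff_sum]
    simp_rw [coeff_smul, coeff_sum, coeff_smul, coeff_X_pow_single, smul_eq_mul,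
      single_eq_single_same, single_eq_single_ne (show (1 : Fin 2) ≠ 0 by decide), pow_mul]
    congr 1
    · refine Finset.sum_congr rfl fun k _ => ?_
      rw [sum_pow_ite _ _ _ (by omega)]
    · by_cases hj0 : j = 0
      · subst hj0
        rw [if_pos rfl]
        refine Finset.sum_congr rfl fun k _ => ?_
        simp only [and_true]
        rw [sum_pow_ite _ _ _ (by omega), pow_zero, mul_one]
      · rw [if_neg hj0]
        apply Finset.sum_eq_zero
        intro k _
        rw [Finset.sum_eq_zero, mul_zero]
        intro i _
        rw [if_neg (by tauto), mul_zero]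
  have hcoeff1 : ∀ j ≤ n, MvPolynomial.coeff (Finsupp.single (1 : Fin 2) j) F
      = (∑ k : ZMod n, β k * ζ ^ (k.val * j))
        + (if j = 0 then ∑ k : ZMod n, α k else 0) := by
    intro j hj
    rw [hFdef, coeff_add, coeff_sum, coeff_sum]
    simp_rw [coeff_smul, coeff_sum, coeff_smul, coeff_X_pow_single, smul_eq_mul,
      single_eq_single_same, single_eq_single_ne (show (0 : Fin 2) ≠ 1 by decide), pow_mul]
    rw [add_comm]
    congr 1
    · refine Finset.sum_congr rfl fun k _ => ?_
      rw [sum_pow_ite _ _ _ (by omega)]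
    · by_cases hj0 : j = 0
      · subst hj0
        rw [if_pos rfl]
        refine Finset.sum_congr rfl fun k _ => ?_
        simp only [and_true]
        rw [sum_pow_ite _ _ _ (by omega), pow_zero, mul_one]
      · rw [if_neg hj0]
        apply Finset.sum_eq_zero
        intro k _
        rw [Finset.sum_eq_zero, mul_zero]
        intro i _
        rw [if_neg (by tauto), mul_zero]
  -- top degree coefficients
  have hpow_n : ∀ k : ZMod n, ζ ^ (k.val * n) = 1 := by
    intro k
    rw [mul_comm, pow_mul, h1, one_pow]
  have hAn : MvPolynomial.coeff (Finsupp.single (0 : Fin 2) n) F = ∑ k : ZMod n, α k := by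
    rw [hcoeff0 n le_rfl, if_neg (by omega), add_zero]
    refine Finset.sum_congr rfl fun k _ => by rw [hpow_n, mul_one]
  have hBn : MvPolynomial.coeff (Finsupp.single (1 : Fin 2) n) F = ∑ k : ZMod n, β k := by
    rw [hcoeff1 n le_rfl, if_neg (by omega), add_zero]
    refine Finset.sum_congr rfl fun k _ => by rw [hpow_n, mul_one]
  have hsumαβ : ∑ k : ZMod n, α k = ∑ k : ZMod n, β k := by
    rw [← hAn, ← hBn, hItop]
  have hzero : (∑ k : ZMod n, α k) + (∑ k : ZMod n, β k) = 0 := by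
    have := hI0 0 (by omega)
    rw [hcoeff0 0 (by omega), if_pos rfl] at this
    calc (∑ k : ZMod n, α k) + ∑ k : ZMod n, β k
        = (∑ k : ZMod n, α k * ζ ^ (k.val * 0)) + ∑ k : ZMod n, β k := by
          congr 1
          refine Finset.sum_congr rfl fun k _ => by rw [Nat.mul_zero, pow_zero, mul_one]
      _ = 0 := this
  have hA0 : ∑ k : ZMod n, α k = 0 := by
    rw [hsumαβ] at hzero
    have h2 : (2 : ℂ) * ∑ k : ZMod n, β k = 0 := by ring_nf; linear_combination hzero
    rw [hsumαβ]
    exact (mul_eq_zero.mp h2).resolve_left two_ne_zero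
  have hB0 : ∑ k : ZMod n, β k = 0 := by rwa [hsumαβ] at hA0
  have hαj : ∀ j < n, ∑ k : ZMod n, α k * ζ ^ (k.val * j) = 0 := by
    intro j hjn
    by_cases hj0 : j = 0
    · subst hj0
      calc ∑ k : ZMod n, α k * ζ ^ (k.val * 0) = ∑ k : ZMod n, α k :=
            Finset.sum_congr rfl fun k _ => by rw [Nat.mul_zero, pow_zero, mul_one]
        _ = 0 := hA0
    · have := hI0 j (by omega)
      rw [hcoeff0 j (by omega), if_neg hj0, add_zero] at this
      exact this
  have hβj : ∀ j < n, ∑ k : ZMod n, β k * ζ ^ (k.val * j) = 0 := by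
    intro j hjn
    by_cases hj0 : j = 0
    · subst hj0
      calc ∑ k : ZMod n, β k * ζ ^ (k.val * 0) = ∑ k : ZMod n, β k :=
            Finset.sum_congr rfl fun k _ => by rw [Nat.mul_zero, pow_zero, mul_one]
        _ = 0 := hB0
    · have := hI1 j (by omega)
      rw [hcoeff1 j (by omega), if_neg hj0, add_zero] at this
      exact this
  have hαz := dft_zero n hζ α hαj
  have hβz := dft_zero n hζ β hβj
  ext g
  rcases g with k | k
  · exact hαz k
  · exact hβz k

section SpanStuff
open scoped Classical
/-- A spanning set of size `≤ 2n` for the quotient. -/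
noncomputable def spanFinset (n : ℕ) : Finset (MvPolynomial (Fin 2) ℂ ⧸ dihedralIdeal n) :=
  (Finset.range (2 * n)).image (fun i =>
    if i ≤ n then Ideal.Quotient.mk (dihedralIdeal n) (X 0 ^ i)
    else Ideal.Quotient.mk (dihedralIdeal n) (X 1 ^ (i - n)))

lemma card_spanFinset_le (n : ℕ) : (spanFinset n).card ≤ 2 * n :=
  le_trans (Finset.card_image_le) (le_of_eq (Finset.card_range _))

lemma mk_X0_pow_mem (n : ℕ) (hn3 : 3 ≤ n) {i : ℕ} (hi : i ≤ n) :
    Ideal.Quotient.mk (dihedralIdeal n) (X 0 ^ i)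
      ∈ Submodule.span ℂ (spanFinset n : Set (MvPolynomial (Fin 2) ℂ ⧸ dihedralIdeal n)) := by
  apply Submodule.subset_span
  simp only [spanFinset, Finset.coe_image, Set.mem_image, Finset.mem_coe, Finset.mem_range]
  exact ⟨i, by omega, by rw [if_pos hi]⟩

lemma mk_X1_pow_mem (n : ℕ) (hn3 : 3 ≤ n) {j : ℕ} (hj1 : 1 ≤ j) (hj : j ≤ n - 1) :
    Ideal.Quotient.mk (dihedralIdeal n) (X 1 ^ j)
      ∈ Submodule.span ℂ (spanFinset n : Set (MvPolynomial (Fin 2) ℂ ⧸ dihedralIdeal n)) := by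
  apply Submodule.subset_span
  simp only [spanFinset, Finset.coe_image, Set.mem_image, Finset.mem_coe, Finset.mem_range]
  have h2 : n + j < 2 * n := by omega
  have h3 : ¬(n + j ≤ n) := by omega
  have h4 : n + j - n = j := by omega
  refine ⟨n + j, h2, ?_⟩
  rw [if_neg h3, h4]

lemma XY_mem (n : ℕ) : (X 0 * X 1 : MvPolynomial (Fin 2) ℂ) ∈ dihedralIdeal n :=
  Ideal.subset_span (Set.mem_insert _ _)

lemma Xn_add_Yn_mem (n : ℕ) :
    ((X 0 : MvPolynomial (Fin 2) ℂ) ^ n + X 1 ^ n) ∈ dihedralIdeal n :=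
  Ideal.subset_span (Set.mem_insert_of_mem _ rfl)

lemma X_pow_mul_X_pow_mem (n a b : ℕ) :
    (X 0 ^ (a + 1) * X 1 ^ (b + 1) : MvPolynomial (Fin 2) ℂ) ∈ dihedralIdeal n := by
  have h : (X 0 ^ (a + 1) * X 1 ^ (b + 1) : MvPolynomial (Fin 2) ℂ)
      = (X 0 ^ a * X 1 ^ b) * (X 0 * X 1) := by ring
  rw [h]
  exact Ideal.mul_mem_left _ _ (XY_mem n)

lemma X0_pow_succ_mem (n : ℕ) (hn3 : 3 ≤ n) :
    (X 0 ^ (n + 1) : MvPolynomial (Fin 2) ℂ) ∈ dihedralIdeal n := by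
  obtain ⟨m, rfl⟩ : ∃ m, n = m + 1 := ⟨n - 1, by omega⟩
  have h : (X 0 ^ (m + 1 + 1) : MvPolynomial (Fin 2) ℂ)
      = X 0 * (X 0 ^ (m + 1) + X 1 ^ (m + 1)) - X 1 ^ m * (X 0 * X 1) := by ring
  rw [h]
  exact sub_mem (Ideal.mul_mem_left _ _ (Xn_add_Yn_mem (m + 1)))
    (Ideal.mul_mem_left _ _ (XY_mem (m + 1)))

lemma span_spanFinset (n : ℕ) (hn3 : 3 ≤ n) :
    Submodule.span ℂ ((spanFinset n : Set (MvPolynomial (Fin 2) ℂ ⧸ dihedralIdeal n))) = ⊤ := by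
  rw [eq_top_iff]
  rintro q -
  obtain ⟨p, rfl⟩ := Ideal.Quotient.mk_surjective q
  induction p using MvPolynomial.induction_on with
  | C a =>
      have h : (C a : MvPolynomial (Fin 2) ℂ) = a • (X 0 ^ 0) := by
        rw [pow_zero, smul_eq_C_mul, mul_one]
      rw [h, mk_smul]
      exact Submodule.smul_mem _ _ (mk_X0_pow_mem n hn3 (by omega))
  | add p q hp hq => rw [map_add]; exact add_mem hp hq
  | mul_X p i hp =>
      rw [map_mul]
      revert hp
      generalize Ideal.Quotient.mk (dihedralIdeal n) p = y
      intro hy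
      refine Submodule.span_induction
        (p := fun x _ => x * Ideal.Quotient.mk (dihedralIdeal n) (X i)
          ∈ Submodule.span ℂ
            ((spanFinset n : Set (MvPolynomial (Fin 2) ℂ ⧸ dihedralIdeal n)))) ?_ ?_ ?_ ?_ hy
      · intro x hx
        simp only [spanFinset, Finset.coe_image, Set.mem_image, Finset.mem_coe,
          Finset.mem_range] at hx
        obtain ⟨t, ht, rfl⟩ := hx
        by_cases htn : t ≤ n
        · rw [if_pos htn, ← map_mul]
          have hi : i = 0 ∨ i = 1 := by omega
          rcases hi with rfl | rfl
          · rw [← pow_succ]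
            by_cases ht1 : t + 1 ≤ n
            · exact mk_X0_pow_mem n hn3 ht1
            · have htn' : t = n := by omega
              rw [htn', Ideal.Quotient.eq_zero_iff_mem.mpr (X0_pow_succ_mem n hn3)]
              exact Submodule.zero_mem _
          · by_cases ht0 : t = 0
            · subst ht0
              rw [pow_zero, one_mul, ← pow_one (X (1 : Fin 2) : MvPolynomial (Fin 2) ℂ)]
              exact mk_X1_pow_mem n hn3 le_rfl (by omega)
            · obtain ⟨a, rfl⟩ : ∃ a, t = a + 1 := ⟨t - 1, by omega⟩
              have h : (X 0 ^ (a + 1) * X 1 : MvPolynomial (Fin 2) ℂ)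
                  = X 0 ^ (a + 1) * X 1 ^ (0 + 1) := by ring
              rw [h, Ideal.Quotient.eq_zero_iff_mem.mpr (X_pow_mul_X_pow_mem n a 0)]
              exact Submodule.zero_mem _
        · rw [if_neg htn, ← map_mul]
          obtain ⟨j, hjdef⟩ : ∃ j, t - n = j + 1 := ⟨t - n - 1, by omega⟩
          rw [hjdef]
          have hi : i = 0 ∨ i = 1 := by omega
          rcases hi with rfl | rfl
          · have h : (X 1 ^ (j + 1) * X 0 : MvPolynomial (Fin 2) ℂ)
                = X 0 ^ (0 + 1) * X 1 ^ (j + 1) := by ring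
            rw [h, Ideal.Quotient.eq_zero_iff_mem.mpr (X_pow_mul_X_pow_mem n 0 j)]
            exact Submodule.zero_mem _
          · rw [← pow_succ]
            by_cases hj1 : j + 1 + 1 ≤ n - 1
            · exact mk_X1_pow_mem n hn3 (by omega) hj1
            · have hjn : j + 1 + 1 = n := by omega
              rw [hjn]
              have h : (X 1 ^ n : MvPolynomial (Fin 2) ℂ)
                  = (X 0 ^ n + X 1 ^ n) - X 0 ^ n := by ring
              rw [h, map_sub, Ideal.Quotient.eq_zero_iff_mem.mpr (Xn_add_Yn_mem n), zero_sub]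
              exact Submodule.neg_mem _ (mk_X0_pow_mem n hn3 le_rfl)
      · show (0 : MvPolynomial (Fin 2) ℂ ⧸ dihedralIdeal n)
            * Ideal.Quotient.mk (dihedralIdeal n) (X i) ∈ _
        rw [zero_mul]; exact Submodule.zero_mem _
      · intro x z _ _ hx hz
        show (x + z) * Ideal.Quotient.mk (dihedralIdeal n) (X i) ∈ _
        rw [add_mul]; exact add_mem hx hz
      · intro a x _ hx
        show (a • x) * Ideal.Quotient.mk (dihedralIdeal n) (X i) ∈ _
        rw [smul_mul_assoc]; exact Submodule.smul_mem _ _ hx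

lemma quot_finite (n : ℕ) (hn3 : 3 ≤ n) :
    Module.Finite ℂ (MvPolynomial (Fin 2) ℂ ⧸ dihedralIdeal n) :=
  ⟨⟨spanFinset n, span_spanFinset n hn3⟩⟩

lemma finrank_quot_le (n : ℕ) (hn3 : 3 ≤ n) :
    Module.finrank ℂ (MvPolynomial (Fin 2) ℂ ⧸ dihedralIdeal n) ≤ 2 * n := by
  have h1 : Module.finrank ℂ (MvPolynomial (Fin 2) ℂ ⧸ dihedralIdeal n)
      = Module.finrank ℂ (Submodule.span ℂ
        ((spanFinset n : Set (MvPolynomial (Fin 2) ℂ ⧸ dihedralIdeal n)))) := by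
    rw [span_spanFinset n hn3, finrank_top]
  rw [h1]
  exact le_trans (finrank_span_finset_le_card (spanFinset n)) (card_spanFinset_le n)

end SpanStuff

/-- Let `n ≥ 3` be odd, `ζ` a primitive `n`-th root of unity, and let `W = D_n` act on
`ℂ[X,Y]` by `r·X = ζX`, `r·Y = ζ⁻¹Y`, `s·X = Y`, `s·Y = X`; the ideal `(XY, Xⁿ+Yⁿ)` is
`W`-stable, so `W` acts on the quotient ring.  The quotient `ℂ[X,Y]/(XY, Xⁿ+Yⁿ)` has
`ℂ`-dimension `2n`, and as a `W`-representation it is isomorphic to the regular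
representation `ℂW`. -/
theorem stmt_17 (n : ℕ) [NeZero n] (hn : 3 ≤ n) (hodd : Odd n)
    (ζ : ℂ) (hζ : IsPrimitiveRoot ζ n) :
    Module.finrank ℂ (MvPolynomial (Fin 2) ℂ ⧸ dihedralIdeal n) = 2 * n ∧
    Nonempty (Rep.of (quotRep n ζ hζ.pow_eq_one) ≅
      Rep.of (Representation.ofMulAction ℂ (DihedralGroup n) (DihedralGroup n))) := by
  have h1 : ζ ^ n = 1 := hζ.pow_eq_one
  have hinj : Function.Injective (Phi n ζ hζ.pow_eq_one) := Phi_injective n hn hζ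
  haveI hfin : Module.Finite ℂ (MvPolynomial (Fin 2) ℂ ⧸ dihedralIdeal n) := quot_finite n hn
  have hdom : Module.finrank ℂ (DihedralGroup n →₀ ℂ) = 2 * n := by
    rw [Module.finrank_finsupp_self, DihedralGroup.card]
  have hge : 2 * n ≤ Module.finrank ℂ (MvPolynomial (Fin 2) ℂ ⧸ dihedralIdeal n) := by
    rw [← hdom]
    exact LinearMap.finrank_le_finrank_of_injective hinj
  have hdim : Module.finrank ℂ (MvPolynomial (Fin 2) ℂ ⧸ dihedralIdeal n) = 2 * n :=
    le_antisymm (finrank_quot_le n hn) hge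
  refine ⟨hdim, ?_⟩
  let e : (DihedralGroup n →₀ ℂ) ≃ₗ[ℂ] (MvPolynomial (Fin 2) ℂ ⧸ dihedralIdeal n) :=
    LinearMap.linearEquivOfInjective (Phi n ζ hζ.pow_eq_one) hinj (by rw [hdom, hdim])
  have he : ∀ x, e x = Phi n ζ hζ.pow_eq_one x := fun x => rfl
  let e' : MonoidAlgebra ℂ (DihedralGroup n) ≃ₗ[ℂ] (MvPolynomial (Fin 2) ℂ ⧸ dihedralIdeal n) :=
    (MonoidAlgebra.coeffLinearEquiv ℂ).trans e
  refine ⟨(Rep.mkIso (Representation.Equiv.mk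
      (ρ := Representation.ofMulAction ℂ (DihedralGroup n) (DihedralGroup n))
      (σ := quotRep n ζ hζ.pow_eq_one) e' fun g => ?_)).symm⟩
  refine LinearMap.ext fun c => ?_
  show e (MonoidAlgebra.coeffLinearEquiv ℂ
      ((Representation.ofMulAction ℂ (DihedralGroup n) (DihedralGroup n)) g c))
    = (quotRep n ζ hζ.pow_eq_one) g (e (MonoidAlgebra.coeffLinearEquiv ℂ c))
  rw [he, he, Representation.ofMulAction_def]
  simp only [LinearMap.comp_apply, LinearEquiv.coe_coe, LinearEquiv.apply_symm_apply]
  exact Phi_equivariant n ζ hζ.pow_eq_one g _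

end DP
end
end

section
/- Let n ≥ 3 be an odd integer and 1 ≤ j ≤ (n−1)/2. If a, b ∈ ℂ[X,Y] satisfy a·X^j + b·Y^j ∈ (X^n − Y^n)·ℂ[X,Y], then the pair (a, b) lies in the ℂ[X,Y]-submodule of ℂ[X,Y]² generated by (Y^j, −X^j) and (X^{n−j}, −Y^{n−j}). -/
open MvPolynomial

/-!
Write `x = X₀`, `y = X₁`. If `a xʲ + b yʲ = c (xⁿ - yⁿ)`, then subtracting `c` times the second
generator leaves a syzygy `a' xʲ + b' yʲ = 0`. Since the prime `y` does not divide `x`, `yʲ`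
divides `a'`, and cancelling `yʲ` shows that `(a', b')` is a multiple of `(yʲ, -xʲ)`.
-/

section Syzygy

variable {R : Type*} [CommRing R] [IsDomain R] {x y : R}

theorem exists_eq_mul_pow_of_mul_pow_add_mul_pow_eq_zero (hy : Prime y) (hxy : ¬ y ∣ x) (j : ℕ)
    {a b : R} (h : a * x ^ j + b * y ^ j = 0) : ∃ d, a = d * y ^ j ∧ b = -(d * x ^ j) := by
  have hy_dvd_a : y ^ j ∣ a :=
    hy.pow_dvd_of_dvd_mul_left j (fun h' => hxy (hy.dvd_of_dvd_pow h'))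
      ⟨-b, by linear_combination h⟩
  obtain ⟨d, rfl⟩ := hy_dvd_a
  refine ⟨d, mul_comm _ _, mul_right_cancel₀ (pow_ne_zero j hy.ne_zero) ?_⟩
  linear_combination h

theorem mem_span_pair_of_mul_pow_add_mul_pow_mem_span (hy : Prime y) (hxy : ¬ y ∣ x)
    {j n : ℕ} (hjn : j ≤ n) {a b : R} (h : a * x ^ j + b * y ^ j ∈ Ideal.span {x ^ n - y ^ n}) :
    (a, b) ∈ Submodule.span R {(y ^ j, -x ^ j), (x ^ (n - j), -y ^ (n - j))} := by
  obtain ⟨c, hc⟩ := Ideal.mem_span_singleton'.mp h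
  have hxn : x ^ (n - j) * x ^ j = x ^ n := by rw [← pow_add, Nat.sub_add_cancel hjn]
  have hyn : y ^ (n - j) * y ^ j = y ^ n := by rw [← pow_add, Nat.sub_add_cancel hjn]
  obtain ⟨d, ha, hb⟩ := exists_eq_mul_pow_of_mul_pow_add_mul_pow_eq_zero hy hxy j
    (a := a - c * x ^ (n - j)) (b := b + c * y ^ (n - j))
    (by linear_combination -hc - c * hxn + c * hyn)
  refine Submodule.mem_span_pair.mpr ⟨d, c, ?_⟩
  simp only [Prod.smul_mk, smul_eq_mul, Prod.mk_add_mk, Prod.mk.injEq]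
  constructor
  · linear_combination -ha
  · linear_combination -hb

end Syzygy

theorem stmt_19_general (n j : ℕ) (hjC : j ≤ (n - 1) / 2)
    (a b : MvPolynomial (Fin 2) ℂ)
    (h : a * X 0 ^ j + b * X 1 ^ j ∈ Ideal.span {(X 0 : MvPolynomial (Fin 2) ℂ) ^ n - X 1 ^ n}) :
    (a, b) ∈ Submodule.span (MvPolynomial (Fin 2) ℂ)
      {((X 1 : MvPolynomial (Fin 2) ℂ) ^ j, -(X 0 : MvPolynomial (Fin 2) ℂ) ^ j),
       ((X 0 : MvPolynomial (Fin 2) ℂ) ^ (n - j), -(X 1 : MvPolynomial (Fin 2) ℂ) ^ (n - j))} :=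
  mem_span_pair_of_mul_pow_add_mul_pow_mem_span X_prime (by simp) (by omega) h

/-- Let `n ≥ 3` be odd and `1 ≤ j ≤ (n-1)/2`.  If `a, b ∈ ℂ[X,Y]` satisfy
`a·Xʲ + b·Yʲ ∈ (Xⁿ - Yⁿ)·ℂ[X,Y]`, then the pair `(a, b)` lies in the
`ℂ[X,Y]`-submodule of `ℂ[X,Y]²` generated by `(Yʲ, -Xʲ)` and `(X^{n-j}, -Y^{n-j})`. -/
theorem stmt_19 (n j : ℕ) (hn : 3 ≤ n) (hodd : Odd n) (hj : 1 ≤ j) (hjC : j ≤ (n - 1) / 2)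
    (a b : MvPolynomial (Fin 2) ℂ)
    (h : a * X 0 ^ j + b * X 1 ^ j ∈ Ideal.span {(X 0 : MvPolynomial (Fin 2) ℂ) ^ n - X 1 ^ n}) :
    (a, b) ∈ Submodule.span (MvPolynomial (Fin 2) ℂ)
      {((X 1 : MvPolynomial (Fin 2) ℂ) ^ j, -(X 0 : MvPolynomial (Fin 2) ℂ) ^ j),
       ((X 0 : MvPolynomial (Fin 2) ℂ) ^ (n - j), -(X 1 : MvPolynomial (Fin 2) ℂ) ^ (n - j))} :=
  stmt_19_general n j hjC a b h
end
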